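/- arXiv:2004.00872 — 5 statements merged into one kernel-verified Lean document; each statement's English description precedes it below -/
import Mathlib

section
/- If w : [0,T] → ℝ^d is (γ,ρ)-irregular with constant C, then for any λ ∈ (0,1) the rescaled path w^λ(t) := λ^{-(1-γ)/ρ} w(λt), defined on [0, T/λ] restricted to [0,T] (or on [0,T] assuming λT ≤ T), is (γ,ρ)-irregular with the same constant C. -/
open MeasureTheory Real

noncomputable section

/-- `Φ^w_{s,t}(ξ) = ∫_s^t exp(i ξ · w_r) dr`. -/
def phiW {d : ℕ} (w : ℝ → EuclideanSpace ℝ (Fin d)) (ξ : EuclideanSpace ℝ (Fin d))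
    (s t : ℝ) : ℂ :=
  ∫ r in s..t, Complex.exp (Complex.I * ((inner ℝ ξ (w r) : ℝ) : ℂ))

/-- `w` is `(γ,ρ)`-irregular on `[0,T]` with constant `C`. -/
def IsIrregularWith {d : ℕ} (T γ ρ C : ℝ) (w : ℝ → EuclideanSpace ℝ (Fin d)) : Prop :=
  ∀ ξ : EuclideanSpace ℝ (Fin d), ξ ≠ 0 → ∀ s t : ℝ, 0 ≤ s → s ≤ t → t ≤ T →
    ‖phiW w ξ s t‖ ≤ C * ‖ξ‖ ^ (-ρ) * (t - s) ^ γ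

/-!
Substituting `r = λu` gives `Φ^{w^λ}_{s,t}(ξ) = λ⁻¹ Φ^w_{λs,λt}(λ^{-(1-γ)/ρ} ξ)`. The irregularity
bound for `w` then gains `λ^{1-γ}` from the frequency and `λ^γ` from the interval, which exactly
cancel the factor `λ⁻¹`.
-/

theorem phiW_smul {d : ℕ} (w : ℝ → EuclideanSpace ℝ (Fin d)) (α : ℝ)
    (ξ : EuclideanSpace ℝ (Fin d)) (s t : ℝ) :
    phiW (fun r => α • w r) ξ s t = phiW w (α • ξ) s t := by
  simp only [phiW, real_inner_smul_left, real_inner_smul_right]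

theorem phiW_comp_mul {d : ℕ} (w : ℝ → EuclideanSpace ℝ (Fin d)) {l : ℝ} (hl : l ≠ 0)
    (ξ : EuclideanSpace ℝ (Fin d)) (s t : ℝ) :
    phiW (fun r => w (l * r)) ξ s t = l⁻¹ • phiW w ξ (l * s) (l * t) :=
  intervalIntegral.integral_comp_mul_left
    (fun r => Complex.exp (Complex.I * ((inner ℝ ξ (w r) : ℝ) : ℂ))) hl

namespace IsIrregularWith

variable {d : ℕ} {T γ ρ C : ℝ} {w : ℝ → EuclideanSpace ℝ (Fin d)}

theorem smul (hw : IsIrregularWith T γ ρ C w) {α : ℝ} (hα : 0 < α) :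
    IsIrregularWith T γ ρ (C * α ^ (-ρ)) (fun r => α • w r) := by
  intro ξ hξ s t hs hst ht
  rw [phiW_smul]
  calc ‖phiW w (α • ξ) s t‖ ≤ C * ‖α • ξ‖ ^ (-ρ) * (t - s) ^ γ :=
        hw _ (smul_ne_zero hα.ne' hξ) s t hs hst ht
    _ = C * α ^ (-ρ) * ‖ξ‖ ^ (-ρ) * (t - s) ^ γ := by
        rw [norm_smul, norm_of_nonneg hα.le, mul_rpow hα.le (norm_nonneg ξ)]
        ring

theorem comp_mul (hw : IsIrregularWith T γ ρ C w) {l : ℝ} (hl0 : 0 < l) (hl1 : l ≤ 1) :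
    IsIrregularWith T γ ρ (C * l ^ (γ - 1)) (fun r => w (l * r)) := by
  intro ξ hξ s t hs hst ht
  have hts : 0 ≤ t - s := sub_nonneg.mpr hst
  rw [phiW_comp_mul w hl0.ne', norm_smul, norm_inv, norm_of_nonneg hl0.le]
  calc l⁻¹ * ‖phiW w ξ (l * s) (l * t)‖
        ≤ l⁻¹ * (C * ‖ξ‖ ^ (-ρ) * (l * t - l * s) ^ γ) := by
        gcongr
        exact hw ξ hξ _ _ (by positivity) (by gcongr) (by nlinarith)
    _ = C * l ^ (γ - 1) * ‖ξ‖ ^ (-ρ) * (t - s) ^ γ := by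
        rw [← mul_sub, mul_rpow hl0.le hts, rpow_sub hl0, rpow_one]
        field_simp

end IsIrregularWith

theorem rescale_isIrregularWith_general {d : ℕ} {T γ ρ C : ℝ} (hρ : 0 < ρ)
    (w : ℝ → EuclideanSpace ℝ (Fin d)) (hw : IsIrregularWith T γ ρ C w)
    (l : ℝ) (hl : l ∈ Set.Ioo (0 : ℝ) 1) :
    IsIrregularWith T γ ρ C (fun t => (l ^ (-((1 - γ) / ρ)) : ℝ) • w (l * t)) := by
  obtain ⟨hl0, hl1⟩ := hl
  have hconst : C * (l ^ (-((1 - γ) / ρ))) ^ (-ρ) * l ^ (γ - 1) = C := by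
    rw [← rpow_mul hl0.le, mul_assoc, ← rpow_add hl0,
      show -((1 - γ) / ρ) * -ρ + (γ - 1) = 0 by field_simp; ring, rpow_zero, mul_one]
  simpa only [hconst] using (hw.smul (rpow_pos_of_pos hl0 (-((1 - γ) / ρ)))).comp_mul hl0 hl1.le

/-- Scaling invariance: if `w` is `(γ,ρ)`-irregular on `[0,T]` with constant `C` and
`λ ∈ (0,1)`, then the rescaled path `w^λ(t) = λ^{-(1-γ)/ρ} w(λ t)` is `(γ,ρ)`-irregular
on `[0,T]` with the same constant (note `λ t ∈ [0,T]` for `t ∈ [0,T]`). -/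
theorem rescale_isIrregularWith {d : ℕ} {T γ ρ C : ℝ} (hT : 0 ≤ T) (hρ : 0 < ρ)
    (w : ℝ → EuclideanSpace ℝ (Fin d)) (hw : IsIrregularWith T γ ρ C w)
    (l : ℝ) (hl : l ∈ Set.Ioo (0 : ℝ) 1) :
    IsIrregularWith T γ ρ C (fun t => (l ^ (-((1 - γ) / ρ)) : ℝ) • w (l * t)) :=
  rescale_isIrregularWith_general hρ w hw l hl
end
end

section
/- If w : [0,T] → ℝ^d is (γ,ρ)-irregular and g ∈ C^β([0,T]; ℝ) with β + γ > 1, then for all ξ ≠ 0 and 0 ≤ s ≤ t ≤ T, |∫_s^t e^{i ξ·w_r} g_r dr| ≤ C ‖Φ^w‖_{W^{γ,ρ}} ‖g‖_{C^β} |t−s|^γ |ξ|^{−ρ}, where the integral is a Young integral of g against r ↦ ∫_s^r e^{iξ·w_u} du and C depends only on β+γ and T. -/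
/-!
Write `E a b = ∫_a^b g f - g a ∫_a^b f` for the local error of the left-point Riemann sum of
the Young integral. Splitting `[a, b]` at its midpoint `m` changes `E` by
`(g m - g a) ∫_m^b f = O((b - a)^(β + γ))`; iterating the splitting `n` times adds up these
defects in a geometric series of ratio `2^(1 - β - γ) < 1`, while the trivial bound on the `2^n`
pieces, `O((b - a)^(1 + β))` each, disappears as `n → ∞`. Hence
`E a b = O((b - a)^(β + γ))`, and `∫_s^t g f = g s ∫_s^t f + E s t` inherits the irregularity
bound of `∫_s^t f` for `f = e^{iξ·w}`.
-/

open MeasureTheory Real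

noncomputable section

lemma two_mul_half_rpow {x : ℝ} (hx : 0 ≤ x) (p : ℝ) : 2 * (x / 2) ^ p = 2 ^ (1 - p) * x ^ p := by
  rw [Real.div_rpow hx zero_le_two, Real.rpow_sub zero_lt_two, Real.rpow_one]
  ring

lemma half_rpow {x : ℝ} (hx : 0 ≤ x) (p : ℝ) : (x / 2) ^ p = 2 ^ (-p) * x ^ p := by
  rw [Real.div_rpow hx zero_le_two, Real.rpow_neg zero_le_two]
  ring

lemma rpow_neg_mul_inv_one_sub_rpow {κ : ℝ} (hκ : 1 < κ) :
    (2 : ℝ) ^ (-κ) * (1 - (2 : ℝ) ^ (1 - κ))⁻¹ = ((2 : ℝ) ^ κ - 2)⁻¹ := by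
  have h2κ : (2 : ℝ) < 2 ^ κ := by
    simpa using Real.rpow_lt_rpow_of_exponent_lt one_lt_two hκ
  rw [Real.rpow_sub zero_lt_two, Real.rpow_one, Real.rpow_neg zero_le_two]
  field_simp

lemma rpow_add_le_rpow_mul_rpow {x T β γ : ℝ} (hx : 0 ≤ x) (hxT : x ≤ T) (hβ : 0 ≤ β)
    (hβγ : β + γ ≠ 0) : x ^ (β + γ) ≤ T ^ β * x ^ γ := by
  rw [Real.rpow_add' hx hβγ]
  gcongr

lemma inv_two_rpow_sub_two_nonneg {κ : ℝ} (hκ : 1 ≤ κ) : 0 ≤ ((2 : ℝ) ^ κ - 2)⁻¹ :=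
  inv_nonneg.2 (sub_nonneg.2 (by simpa using Real.rpow_le_rpow_of_exponent_le one_le_two hκ))

section Sewing

variable {F : Type*} [NormedAddCommGroup F] {s : Set ℝ} [s.OrdConnected] {E : ℝ → ℝ → F}
  {A B κ μ : ℝ}

lemma norm_le_geom_sum_of_midpoint_defect_le
    (hδ : ∀ a ∈ s, ∀ b ∈ s, a ≤ b →
      ‖E a b - E a ((a + b) / 2) - E ((a + b) / 2) b‖ ≤ A * (b - a) ^ κ)
    (hE : ∀ a ∈ s, ∀ b ∈ s, a ≤ b → ‖E a b‖ ≤ B * (b - a) ^ μ) (n : ℕ) :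
    ∀ a ∈ s, ∀ b ∈ s, a ≤ b → ‖E a b‖ ≤
      A * (b - a) ^ κ * ∑ k ∈ Finset.range n, ((2 : ℝ) ^ (1 - κ)) ^ k
        + B * (b - a) ^ μ * ((2 : ℝ) ^ (1 - μ)) ^ n := by
  induction n with
  | zero => simpa using hE
  | succ n ih =>
    intro a ha b hb hab
    set m := (a + b) / 2 with hm_def
    have ham : a ≤ m := by linarith
    have hmb : m ≤ b := by linarith
    have hm : m ∈ s := Set.Icc_subset s ha hb ⟨ham, hmb⟩
    have hmid : b - m = (b - a) / 2 ∧ m - a = (b - a) / 2 := by constructor <;> ring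
    have hleft := ih a ha m hm ham
    have hright := ih m hm b hb hmb
    rw [hmid.2] at hleft
    rw [hmid.1] at hright
    have hsplit : ‖E a b‖ ≤ ‖E a m‖ + ‖E m b‖ + ‖E a b - E a m - E m b‖ := by
      calc ‖E a b‖ = ‖E a m + E m b + (E a b - E a m - E m b)‖ := by congr 1; abel
        _ ≤ _ := norm_add₃_le
    have hba : 0 ≤ b - a := by linarith
    calc ‖E a b‖
        ≤ A * (2 * ((b - a) / 2) ^ κ) * ∑ k ∈ Finset.range n, ((2 : ℝ) ^ (1 - κ)) ^ k
          + B * (2 * ((b - a) / 2) ^ μ) * ((2 : ℝ) ^ (1 - μ)) ^ n + A * (b - a) ^ κ := by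
          linarith [hδ a ha b hb hab]
      _ = _ := by
          rw [two_mul_half_rpow hba, two_mul_half_rpow hba, geom_sum_succ, pow_succ]
          ring

theorem norm_le_of_midpoint_defect_le (hκ : 1 < κ) (hμ : 1 < μ)
    (hδ : ∀ a ∈ s, ∀ b ∈ s, a ≤ b →
      ‖E a b - E a ((a + b) / 2) - E ((a + b) / 2) b‖ ≤ A * (b - a) ^ κ)
    (hE : ∀ a ∈ s, ∀ b ∈ s, a ≤ b → ‖E a b‖ ≤ B * (b - a) ^ μ)
    {a b : ℝ} (ha : a ∈ s) (hb : b ∈ s) (hab : a ≤ b) :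
    ‖E a b‖ ≤ A * (b - a) ^ κ * (1 - (2 : ℝ) ^ (1 - κ))⁻¹ := by
  have hratio {p : ℝ} (hp : 1 < p) : (2 : ℝ) ^ (1 - p) < 1 :=
    Real.rpow_lt_one_of_one_lt_of_neg one_lt_two (by linarith)
  have hlim := (((hasSum_geometric_of_lt_one (by positivity) (hratio hκ)).tendsto_sum_nat
    ).const_mul (A * (b - a) ^ κ)).add
    ((tendsto_pow_atTop_nhds_zero_of_lt_one (by positivity) (hratio hμ)).const_mul
      (B * (b - a) ^ μ))
  simpa using ge_of_tendsto' hlim fun n =>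
    norm_le_geom_sum_of_midpoint_defect_le hδ hE n a ha b hb hab

end Sewing

lemma continuousOn_of_norm_sub_le_rpow {F : Type*} [SeminormedAddCommGroup F] {g : ℝ → F}
    {s : Set ℝ} {M β : ℝ} (hβ : 0 < β) (hg : ∀ u ∈ s, ∀ v ∈ s, ‖g v - g u‖ ≤ M * |v - u| ^ β) :
    ContinuousOn g s := by
  intro x hx
  have hcont : Continuous fun v : ℝ => M * |v - x| ^ β :=
    continuous_const.mul ((continuous_id.sub continuous_const).abs.rpow_const
      fun _ => Or.inr hβ.le)
  have hlim : Filter.Tendsto (fun v => M * |v - x| ^ β) (nhdsWithin x s) (nhds 0) := by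
    simpa [Real.zero_rpow hβ.ne'] using (hcont.tendsto x).mono_left nhdsWithin_le_nhds
  rw [ContinuousWithinAt, tendsto_iff_norm_sub_tendsto_zero]
  exact squeeze_zero' (Filter.Eventually.of_forall fun _ => norm_nonneg _)
    (eventually_nhdsWithin_of_forall fun v hv => hg x hx v hv) hlim

section Young

def youngRemainder (g f : ℝ → ℂ) (a b : ℝ) : ℂ :=
  (∫ r in a..b, g r * f r) - g a * ∫ r in a..b, f r

variable {g f : ℝ → ℂ}

lemma youngRemainder_sub_sub {a m b : ℝ} (hgf₁ : IntervalIntegrable (fun r => g r * f r) volume a m)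
    (hgf₂ : IntervalIntegrable (fun r => g r * f r) volume m b)
    (hf₁ : IntervalIntegrable f volume a m) (hf₂ : IntervalIntegrable f volume m b) :
    youngRemainder g f a b - youngRemainder g f a m - youngRemainder g f m b
      = (g m - g a) * ∫ r in m..b, f r := by
  simp only [youngRemainder, ← intervalIntegral.integral_add_adjacent_intervals hgf₁ hgf₂,
    ← intervalIntegral.integral_add_adjacent_intervals hf₁ hf₂]
  ring

lemma youngRemainder_eq_integral {a b : ℝ}
    (hgf : IntervalIntegrable (fun r => g r * f r) volume a b)
    (hf : IntervalIntegrable f volume a b) :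
    youngRemainder g f a b = ∫ r in a..b, (g r - g a) * f r := by
  simp only [sub_mul, intervalIntegral.integral_sub hgf (hf.const_mul (g a)),
    intervalIntegral.integral_const_mul, youngRemainder]

variable {s : Set ℝ} [s.OrdConnected] {β γ M L N : ℝ}

lemma norm_youngRemainder_le_rpow_add_one (hM : 0 ≤ M) (hfN : ∀ r, ‖f r‖ ≤ N)
    (hg : ∀ u ∈ s, ∀ v ∈ s, ‖g v - g u‖ ≤ M * |v - u| ^ β) (hβ : 0 < β) {a b : ℝ}
    (hgf : IntervalIntegrable (fun r => g r * f r) volume a b)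
    (hf : IntervalIntegrable f volume a b) (ha : a ∈ s) (hb : b ∈ s) (hab : a ≤ b) :
    ‖youngRemainder g f a b‖ ≤ M * N * (b - a) ^ (β + 1) := by
  rw [youngRemainder_eq_integral hgf hf, Real.rpow_add_one' (by linarith) (by linarith)]
  have hpt : ∀ r ∈ Set.uIoc a b, ‖(g r - g a) * f r‖ ≤ M * (b - a) ^ β * N := by
    intro r hr
    rw [Set.uIoc_of_le hab] at hr
    rw [norm_mul]
    refine mul_le_mul ?_ (hfN r) (norm_nonneg _) (by positivity)
    calc ‖g r - g a‖ ≤ M * |r - a| ^ β :=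
          hg a ha r (Set.Icc_subset s ha hb (Set.Ioc_subset_Icc_self hr))
      _ ≤ M * (b - a) ^ β := by
        gcongr
        rw [abs_of_nonneg (by linarith [hr.1])]
        linarith [hr.2]
  calc _ ≤ M * (b - a) ^ β * N * |b - a| := intervalIntegral.norm_integral_le_of_norm_le_const hpt
    _ = _ := by rw [abs_of_nonneg (by linarith)]; ring

lemma norm_youngRemainder_midpoint_defect_le (hβγ : β + γ ≠ 0)
    (hf : ∀ a b, IntervalIntegrable f volume a b)
    (hgf : ∀ a ∈ s, ∀ b ∈ s, IntervalIntegrable (fun r => g r * f r) volume a b)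
    (hg : ∀ u ∈ s, ∀ v ∈ s, ‖g v - g u‖ ≤ M * |v - u| ^ β)
    (hF : ∀ a ∈ s, ∀ b ∈ s, a ≤ b → ‖∫ r in a..b, f r‖ ≤ L * (b - a) ^ γ)
    {a b : ℝ} (ha : a ∈ s) (hb : b ∈ s) (hab : a ≤ b) :
    ‖youngRemainder g f a b - youngRemainder g f a ((a + b) / 2)
        - youngRemainder g f ((a + b) / 2) b‖
      ≤ M * L * 2 ^ (-(β + γ)) * (b - a) ^ (β + γ) := by
  set m := (a + b) / 2 with hm_def
  have hm : m ∈ s := Set.Icc_subset s ha hb ⟨by linarith, by linarith⟩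
  have hhalf : m - a = (b - a) / 2 ∧ b - m = (b - a) / 2 := by constructor <;> ring
  rw [youngRemainder_sub_sub (hgf a ha m hm) (hgf m hm b hb) (hf a m) (hf m b), norm_mul]
  have hg_am := hg a ha m hm
  have hF_mb := hF m hm b hb (by linarith)
  rw [hhalf.1, abs_of_nonneg (by linarith)] at hg_am
  rw [hhalf.2] at hF_mb
  calc _ ≤ M * ((b - a) / 2) ^ β * (L * ((b - a) / 2) ^ γ) :=
        mul_le_mul hg_am hF_mb (norm_nonneg _) ((norm_nonneg _).trans hg_am)
    _ = M * L * ((b - a) / 2) ^ (β + γ) := by rw [Real.rpow_add' (by linarith) hβγ]; ring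
    _ = _ := by rw [half_rpow (by linarith)]; ring

theorem norm_youngRemainder_le (hβ : 0 < β) (hβγ : 1 < β + γ) (hM : 0 ≤ M)
    (hf : AEStronglyMeasurable f) (hfN : ∀ r, ‖f r‖ ≤ N)
    (hg : ∀ u ∈ s, ∀ v ∈ s, ‖g v - g u‖ ≤ M * |v - u| ^ β)
    (hF : ∀ a ∈ s, ∀ b ∈ s, a ≤ b → ‖∫ r in a..b, f r‖ ≤ L * (b - a) ^ γ)
    {a b : ℝ} (ha : a ∈ s) (hb : b ∈ s) (hab : a ≤ b) :
    ‖youngRemainder g f a b‖ ≤ M * L * ((2 : ℝ) ^ (β + γ) - 2)⁻¹ * (b - a) ^ (β + γ) := by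
  have hfi (a b : ℝ) : IntervalIntegrable f volume a b :=
    intervalIntegrable_const.mono_fun' hf.restrict (Filter.Eventually.of_forall hfN)
  have hgfi : ∀ a ∈ s, ∀ b ∈ s, IntervalIntegrable (fun r => g r * f r) volume a b :=
    fun a ha b hb => (hfi a b).continuousOn_mul
      ((continuousOn_of_norm_sub_le_rpow hβ hg).mono (Set.OrdConnected.uIcc_subset ‹_› ha hb))
  calc ‖youngRemainder g f a b‖
      ≤ M * L * 2 ^ (-(β + γ)) * (b - a) ^ (β + γ) * (1 - (2 : ℝ) ^ (1 - (β + γ)))⁻¹ :=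
        norm_le_of_midpoint_defect_le (E := youngRemainder g f) (A := M * L * 2 ^ (-(β + γ)))
          (B := M * N) hβγ (by linarith : 1 < β + 1)
          (fun a ha b hb hab => norm_youngRemainder_midpoint_defect_le (by linarith) hfi hgfi
            hg hF ha hb hab)
          (fun a ha b hb hab => norm_youngRemainder_le_rpow_add_one hM hfN hg hβ
            (hgfi a ha b hb) (hfi a b) ha hb hab) ha hb hab
    _ = _ := by rw [← rpow_neg_mul_inv_one_sub_rpow hβγ]; ring

theorem norm_integral_mul_le (hβ : 0 < β) (hβγ : 1 < β + γ) (hM : 0 ≤ M) (hL : 0 ≤ L)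
    (hf : AEStronglyMeasurable f) (hfN : ∀ r, ‖f r‖ ≤ N)
    (hg : ∀ u ∈ s, ∀ v ∈ s, ‖g v - g u‖ ≤ M * |v - u| ^ β)
    (hF : ∀ a ∈ s, ∀ b ∈ s, a ≤ b → ‖∫ r in a..b, f r‖ ≤ L * (b - a) ^ γ)
    {a b M₀ D : ℝ} (ha : a ∈ s) (hb : b ∈ s) (hab : a ≤ b) (hga : ‖g a‖ ≤ M₀) (hD : b - a ≤ D) :
    ‖∫ r in a..b, g r * f r‖
      ≤ (M₀ + ((2 : ℝ) ^ (β + γ) - 2)⁻¹ * D ^ β * M) * L * (b - a) ^ γ := by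
  have hc := inv_two_rpow_sub_two_nonneg hβγ.le
  have hba : 0 ≤ b - a := by linarith
  calc ‖∫ r in a..b, g r * f r‖ = ‖youngRemainder g f a b + g a * ∫ r in a..b, f r‖ := by
        rw [youngRemainder, sub_add_cancel]
    _ ≤ M * L * ((2 : ℝ) ^ (β + γ) - 2)⁻¹ * (b - a) ^ (β + γ) + M₀ * (L * (b - a) ^ γ) := by
        refine (norm_add_le _ _).trans (add_le_add
          (norm_youngRemainder_le hβ hβγ hM hf hfN hg hF ha hb hab) ?_)
        rw [norm_mul]
        exact mul_le_mul hga (hF a ha b hb hab) (norm_nonneg _) ((norm_nonneg _).trans hga)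
    _ ≤ M * L * ((2 : ℝ) ^ (β + γ) - 2)⁻¹ * (D ^ β * (b - a) ^ γ) + M₀ * (L * (b - a) ^ γ) := by
        gcongr
        exact rpow_add_le_rpow_mul_rpow hba hD hβ.le (by linarith)
    _ = _ := by ring

end Young

lemma IsIrregularWith.nonneg {d : ℕ} {T γ ρ C : ℝ} {w : ℝ → EuclideanSpace ℝ (Fin d)}
    (hw : IsIrregularWith T γ ρ C w) (hT : 0 < T) {ξ : EuclideanSpace ℝ (Fin d)} (hξ : ξ ≠ 0) :
    0 ≤ C := by
  have h := (norm_nonneg _).trans (hw ξ hξ 0 T le_rfl hT.le le_rfl)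
  rw [mul_assoc] at h
  exact nonneg_of_mul_nonneg_left h (by positivity)

theorem young_weighted_irregular_bound_general {T γ β : ℝ} (hT : 0 < T) (hβ : 0 < β) (hβγ : 1 < β + γ) :
    ∃ C : ℝ, 0 < C ∧ ∀ (d : ℕ) (ρ : ℝ), 0 < ρ →
      ∀ w : ℝ → EuclideanSpace ℝ (Fin d), Measurable w →
      ∀ K : ℝ, IsIrregularWith T γ ρ K w →
      ∀ (g : ℝ → ℝ) (M0 M1 : ℝ),
        (∀ r ∈ Set.Icc (0 : ℝ) T, |g r| ≤ M0) →
        (∀ u ∈ Set.Icc (0 : ℝ) T, ∀ v ∈ Set.Icc (0 : ℝ) T,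
          |g v - g u| ≤ M1 * |v - u| ^ β) →
      ∀ ξ : EuclideanSpace ℝ (Fin d), ξ ≠ 0 → ∀ s t : ℝ, 0 ≤ s → s ≤ t → t ≤ T →
        ‖∫ r in s..t,
            (g r : ℂ) * Complex.exp (Complex.I * ((inner ℝ ξ (w r) : ℝ) : ℂ))‖
          ≤ C * K * (M0 + M1) * (t - s) ^ γ * ‖ξ‖ ^ (-ρ) := by
  set c : ℝ := ((2 : ℝ) ^ (β + γ) - 2)⁻¹
  have hc : 0 ≤ c := inv_two_rpow_sub_two_nonneg hβγ.le
  refine ⟨1 + c * T ^ β, by positivity, ?_⟩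
  intro d ρ _ w hw K hK g M0 M1 hM0 hM1 ξ hξ s t hs hst htT
  have hK_nonneg : 0 ≤ K := hK.nonneg hT hξ
  have hM0_nonneg : 0 ≤ M0 := (abs_nonneg _).trans (hM0 0 ⟨le_rfl, hT.le⟩)
  have hM1_nonneg : 0 ≤ M1 := nonneg_of_mul_nonneg_left
    ((abs_nonneg _).trans (hM1 0 ⟨le_rfl, hT.le⟩ T ⟨hT.le, le_rfl⟩)) (by positivity)
  have hyoung := norm_integral_mul_le (s := Set.Icc 0 T) (g := fun r => (g r : ℂ))
    (f := fun r => Complex.exp (Complex.I * ((inner ℝ ξ (w r) : ℝ) : ℂ)))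
    (L := K * ‖ξ‖ ^ (-ρ)) (N := 1) hβ hβγ hM1_nonneg (by positivity) (by fun_prop)
    (fun r => by simp [Complex.norm_exp])
    (fun u hu v hv => by simpa [← Complex.ofReal_sub] using hM1 u hu v hv)
    (fun a ha b hb hab => hK ξ hξ a b ha.1 hab hb.2) ⟨hs, hst.trans htT⟩ ⟨hs.trans hst, htT⟩ hst
    (by simpa using hM0 s ⟨hs, hst.trans htT⟩) (by linarith : t - s ≤ T)
  refine hyoung.trans ?_
  have : 0 ≤ K * ‖ξ‖ ^ (-ρ) * (t - s) ^ γ := by positivity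
  nlinarith [mul_nonneg (mul_nonneg hc (by positivity : (0 : ℝ) ≤ T ^ β)) hM0_nonneg]

/-- Young-integral estimate: if `w` is `(γ,ρ)`-irregular with constant `K` and
`g ∈ C^β([0,T];ℝ)` with `β + γ > 1` (with sup bound `M0` and Hölder constant `M1`, so
`‖g‖_{C^β} ≤ M0 + M1`), then
`|∫_s^t e^{iξ·w_r} g_r dr| ≤ C K ‖g‖_{C^β} |t−s|^γ |ξ|^{−ρ}`,
with `C` depending only on `β`, `γ` and `T`. -/
theorem young_weighted_irregular_bound {T γ β : ℝ} (hT : 0 < T) (hγ : 0 < γ)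
    (hγ1 : γ ≤ 1) (hβ : 0 < β) (hβγ : 1 < β + γ) :
    ∃ C : ℝ, 0 < C ∧ ∀ (d : ℕ) (ρ : ℝ), 0 < ρ →
      ∀ w : ℝ → EuclideanSpace ℝ (Fin d), Measurable w →
      ∀ K : ℝ, IsIrregularWith T γ ρ K w →
      ∀ (g : ℝ → ℝ) (M0 M1 : ℝ),
        (∀ r ∈ Set.Icc (0 : ℝ) T, |g r| ≤ M0) →
        (∀ u ∈ Set.Icc (0 : ℝ) T, ∀ v ∈ Set.Icc (0 : ℝ) T,
          |g v - g u| ≤ M1 * |v - u| ^ β) →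
      ∀ ξ : EuclideanSpace ℝ (Fin d), ξ ≠ 0 → ∀ s t : ℝ, 0 ≤ s → s ≤ t → t ≤ T →
        ‖∫ r in s..t,
            (g r : ℂ) * Complex.exp (Complex.I * ((inner ℝ ξ (w r) : ℝ) : ℂ))‖
          ≤ C * K * (M0 + M1) * (t - s) ^ γ * ‖ξ‖ ^ (-ρ) :=
  young_weighted_irregular_bound_general hT hβ hβγ
end
end

section
/- Invariance under smooth reparametrization: let w be (γ,ρ)-irregular and τ : [0,T] → [τ(0),τ(T)] a C^{1+β}-diffeomorphism with β + γ > 1. Then w̃_r := w_{τ^{-1}(r)} is (γ,ρ)-irregular and ‖Φ^{w̃}‖_{W^{γ,ρ}} ≲ ‖τ^{-1}‖_{C^{1+β}} ‖τ‖_{C^{1+β}} ‖Φ^w‖_{W^{γ,ρ}}. -/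
open MeasureTheory Real

noncomputable section

/-!
Substituting `r = τ x` turns `∫_s^t e^{iξ·w(σ r)} dr` into `∫_a^b |τ'| e^{iξ·w}`, where
`[a, b] = σ([s, t])` has length at most `M (t - s)`.  The latter is a Young integral of the
`β`-Hölder function `|τ'|` against the `γ`-Hölder increments `Φ^w_{u,v}(ξ)`, and since
`β + γ > 1` it is bounded by the sewing argument: the Riemann sums `∑ g(u) Φ_{u,v}` over the
dyadic partitions converge to the integral, and refining a partition once changes each term by
`(g(m) - g(u)) Φ_{m,v}`, of size `|v - u|^{β+γ}`, so the corrections form a geometric series.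
-/

open Set Filter Topology
open scoped NNReal

namespace Finset

lemma sum_range_two_mul {M : Type*} [AddCommMonoid M] (m : ℕ) (a : ℕ → M) :
    ∑ j ∈ range (2 * m), a j = ∑ k ∈ range m, (a (2 * k) + a (2 * k + 1)) := by
  induction m with
  | zero => simp
  | succ m ih =>
    rw [show 2 * (m + 1) = 2 * m + 1 + 1 by ring, sum_range_succ, sum_range_succ, ih,
      sum_range_succ, add_assoc]

end Finset

lemma holderOnWith_of_dist_le {X Y : Type*} [PseudoMetricSpace X] [PseudoMetricSpace Y]
    {C r : ℝ≥0} {f : X → Y} {s : Set X}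
    (h : ∀ x ∈ s, ∀ y ∈ s, dist (f x) (f y) ≤ C * dist x y ^ (r : ℝ)) :
    HolderOnWith C r f s := by
  intro x hx y hy
  rw [edist_dist, edist_dist, ENNReal.ofReal_rpow_of_nonneg dist_nonneg r.coe_nonneg,
    ← ENNReal.ofReal_coe_nnreal, ← ENNReal.ofReal_mul C.coe_nonneg]
  exact ENNReal.ofReal_le_ofReal (h x hx y hy)

lemma rpow_le_mul_rpow_of_le_mul {x y M γ : ℝ} (hx : 0 ≤ x) (hy : 0 ≤ y) (hM : 1 ≤ M)
    (hγ : 0 ≤ γ) (hγ1 : γ ≤ 1) (h : x ≤ M * y) : x ^ γ ≤ M * y ^ γ :=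
  calc x ^ γ ≤ (M * y) ^ γ := rpow_le_rpow hx h hγ
    _ = M ^ γ * y ^ γ := mul_rpow (by linarith) hy
    _ ≤ M * y ^ γ := by gcongr; exact rpow_le_self_of_one_le hM hγ1

lemma two_lt_two_rpow {θ : ℝ} (hθ : 1 < θ) : 2 < (2 : ℝ) ^ θ := by
  simpa using rpow_lt_rpow_of_exponent_lt one_lt_two hθ

def dyadicPoint (c d : ℝ) (n k : ℕ) : ℝ := c + (d - c) * k / 2 ^ n

def dyadicSum {E : Type*} [AddCommMonoid E] (Ξ : ℝ → ℝ → E) (c d : ℝ) (n : ℕ) : E :=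
  ∑ k ∈ Finset.range (2 ^ n), Ξ (dyadicPoint c d n k) (dyadicPoint c d n (k + 1))

section Dyadic

variable {E : Type*} {c d : ℝ}

@[simp]
lemma dyadicPoint_zero_right (n : ℕ) : dyadicPoint c d n 0 = c := by
  simp [dyadicPoint]

@[simp]
lemma dyadicPoint_two_pow (n : ℕ) : dyadicPoint c d n (2 ^ n) = d := by
  simp [dyadicPoint]

lemma dyadicPoint_succ_sub (n k : ℕ) :
    dyadicPoint c d n (k + 1) - dyadicPoint c d n k = (d - c) / 2 ^ n := by
  simp only [dyadicPoint]
  push_cast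
  ring

lemma dyadicPoint_mono (hcd : c ≤ d) (n : ℕ) : Monotone (dyadicPoint c d n) := by
  intro k j hkj
  simp only [dyadicPoint]
  gcongr

lemma dyadicPoint_mem_Icc (hcd : c ≤ d) {n k : ℕ} (hk : k ≤ 2 ^ n) :
    dyadicPoint c d n k ∈ Icc c d := by
  constructor
  · simpa using dyadicPoint_mono hcd n (Nat.zero_le k)
  · simpa using dyadicPoint_mono hcd n hk

lemma dyadicPoint_succ_two_mul (n k : ℕ) :
    dyadicPoint c d (n + 1) (2 * k) = dyadicPoint c d n k := by
  simp only [dyadicPoint]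
  push_cast
  field_simp
  ring

lemma dyadicPoint_succ_two_mul_add_one (n k : ℕ) :
    dyadicPoint c d (n + 1) (2 * k + 1) =
      (dyadicPoint c d n k + dyadicPoint c d n (k + 1)) / 2 := by
  simp only [dyadicPoint]
  push_cast
  field_simp
  ring

variable [AddCommMonoid E]

lemma dyadicSum_zero (Ξ : ℝ → ℝ → E) : dyadicSum Ξ c d 0 = Ξ c d := by
  simp [dyadicSum, dyadicPoint]

lemma dyadicSum_succ (Ξ : ℝ → ℝ → E) (n : ℕ) :
    dyadicSum Ξ c d (n + 1) = ∑ k ∈ Finset.range (2 ^ n),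
      (Ξ (dyadicPoint c d n k) ((dyadicPoint c d n k + dyadicPoint c d n (k + 1)) / 2) +
        Ξ ((dyadicPoint c d n k + dyadicPoint c d n (k + 1)) / 2)
          (dyadicPoint c d n (k + 1))) := by
  rw [dyadicSum, pow_succ', Finset.sum_range_two_mul]
  refine Finset.sum_congr rfl fun k _ => ?_
  rw [dyadicPoint_succ_two_mul, dyadicPoint_succ_two_mul_add_one,
    show 2 * k + 1 + 1 = 2 * (k + 1) by ring, dyadicPoint_succ_two_mul]

end Dyadic

section Sewing

variable {E : Type*} [NormedAddCommGroup E] {c d : ℝ}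

lemma two_pow_mul_rpow_div_two_pow_div_two {L θ : ℝ} (hL : 0 ≤ L) (n : ℕ) :
    (2 : ℝ) ^ n * (L / 2 ^ n / 2) ^ θ = L ^ θ / 2 ^ θ * (2 / 2 ^ θ) ^ n := by
  rw [div_rpow (by positivity) zero_le_two, div_rpow hL (by positivity),
    ← rpow_pow_comm zero_le_two, div_pow]
  field_simp

theorem norm_sub_le_of_tendsto_dyadicSum {Ξ : ℝ → ℝ → E} {I : E} {B θ : ℝ}
    (hcd : c ≤ d) (hθ : 1 < θ) (hI : Tendsto (dyadicSum Ξ c d) atTop (𝓝 I))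
    (hΞ : ∀ u ∈ Icc c d, ∀ v ∈ Icc c d, u ≤ v →
      ‖Ξ u ((u + v) / 2) + Ξ ((u + v) / 2) v - Ξ u v‖ ≤ B * ((v - u) / 2) ^ θ) :
    ‖Ξ c d - I‖ ≤ B * (d - c) ^ θ / (2 ^ θ - 2) := by
  have hr : 2 / (2 : ℝ) ^ θ < 1 :=
    (div_lt_one (by linarith [two_lt_two_rpow hθ])).2 (two_lt_two_rpow hθ)
  have hstep : ∀ n, dist (dyadicSum Ξ c d n) (dyadicSum Ξ c d (n + 1)) ≤
      B * (d - c) ^ θ / 2 ^ θ * (2 / 2 ^ θ) ^ n := by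
    intro n
    have hsum : B * (d - c) ^ θ / 2 ^ θ * (2 / 2 ^ θ) ^ n =
        ∑ _k ∈ Finset.range (2 ^ n), B * ((d - c) / 2 ^ n / 2) ^ θ := by
      rw [Finset.sum_const, Finset.card_range, nsmul_eq_mul, mul_div_assoc, mul_assoc,
        ← two_pow_mul_rpow_div_two_pow_div_two (sub_nonneg.2 hcd)]
      push_cast
      ring
    rw [dist_comm, dist_eq_norm, dyadicSum_succ, dyadicSum, ← Finset.sum_sub_distrib, hsum]
    refine (norm_sum_le _ _).trans (Finset.sum_le_sum fun k hk => ?_)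
    have hk := Finset.mem_range.1 hk
    have := hΞ _ (dyadicPoint_mem_Icc hcd hk.le) _ (dyadicPoint_mem_Icc hcd hk)
      (dyadicPoint_mono hcd n k.le_succ)
    rwa [dyadicPoint_succ_sub] at this
  have := dist_le_of_le_geometric_of_tendsto₀ _ _ hr hstep hI
  rw [dyadicSum_zero, dist_eq_norm] at this
  convert this using 1
  field_simp

end Sewing

section Young

variable {E : Type*} [NormedAddCommGroup E] {f : ℝ → E} {g : ℝ → ℝ} {c d : ℝ} {Nh β : ℝ≥0}

lemma IntervalIntegrable.mono_Icc (hf : IntervalIntegrable f volume c d) {u v : ℝ}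
    (hu : u ∈ Icc c d) (hv : v ∈ Icc c d) : IntervalIntegrable f volume u v :=
  hf.mono_set (uIcc_subset_uIcc (Icc_subset_uIcc hu) (Icc_subset_uIcc hv))

variable [NormedSpace ℝ E]

lemma integral_eq_dyadicSum (hcd : c ≤ d) (hf : IntervalIntegrable f volume c d) (n : ℕ) :
    ∫ r in c..d, f r = dyadicSum (fun u v => ∫ r in u..v, f r) c d n := by
  rw [dyadicSum, intervalIntegral.sum_integral_adjacent_intervals, dyadicPoint_zero_right,
    dyadicPoint_two_pow]
  intro k hk
  exact hf.mono_Icc (dyadicPoint_mem_Icc hcd hk.le) (dyadicPoint_mem_Icc hcd hk)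

lemma norm_integral_smul_sub_smul_integral_le {u v : ℝ} (huv : u ≤ v) (hβ : 0 < β)
    (hf : IntervalIntegrable f volume u v) (hg : HolderOnWith Nh β g (Icc u v)) :
    ‖(∫ r in u..v, g r • f r) - g u • ∫ r in u..v, f r‖ ≤
      Nh * (v - u) ^ (β : ℝ) * ∫ r in u..v, ‖f r‖ := by
  have hgf : IntervalIntegrable (fun r => g r • f r) volume u v :=
    hf.continuousOn_smul (by rw [uIcc_of_le huv]; exact hg.continuousOn hβ)
  have hgu : IntervalIntegrable (fun r => g u • f r) volume u v := hf.smul (g u)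
  rw [← intervalIntegral.integral_smul, ← intervalIntegral.integral_sub hgf hgu,
    ← intervalIntegral.integral_const_mul]
  refine intervalIntegral.norm_integral_le_of_norm_le huv (ae_of_all _ fun r hr => ?_)
    (hf.norm.const_mul _)
  rw [← sub_smul, norm_smul, Real.norm_eq_abs, ← Real.dist_eq]
  gcongr
  refine hg.dist_le_of_le ⟨hr.1.le, hr.2⟩ ⟨le_rfl, huv⟩ ?_
  rw [Real.dist_eq, abs_of_pos (sub_pos.2 hr.1)]
  linarith [hr.2]

lemma norm_dyadicSum_sub_integral_smul_le (hcd : c ≤ d) (hβ : 0 < β)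
    (hf : IntervalIntegrable f volume c d) (hg : HolderOnWith Nh β g (Icc c d)) (n : ℕ) :
    ‖dyadicSum (fun u v => g u • ∫ r in u..v, f r) c d n - ∫ r in c..d, g r • f r‖ ≤
      Nh * ((d - c) / 2 ^ n) ^ (β : ℝ) * ∫ r in c..d, ‖f r‖ := by
  have hgf : IntervalIntegrable (fun r => g r • f r) volume c d :=
    hf.continuousOn_smul (by rw [uIcc_of_le hcd]; exact hg.continuousOn hβ)
  rw [integral_eq_dyadicSum hcd hgf n, integral_eq_dyadicSum hcd hf.norm n, dyadicSum,
    dyadicSum, dyadicSum, ← Finset.sum_sub_distrib, Finset.mul_sum]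
  refine (norm_sum_le _ _).trans (Finset.sum_le_sum fun k hk => ?_)
  have hk := Finset.mem_range.1 hk
  have hu := dyadicPoint_mem_Icc hcd hk.le
  have hv := dyadicPoint_mem_Icc hcd hk
  rw [← dyadicPoint_succ_sub n k, norm_sub_rev]
  exact norm_integral_smul_sub_smul_integral_le (dyadicPoint_mono hcd n k.le_succ) hβ
    (hf.mono_Icc hu hv) (hg.mono (Icc_subset_Icc hu.1 hv.2))

lemma tendsto_dyadicSum_smul_integral (hcd : c ≤ d) (hβ : 0 < β)
    (hf : IntervalIntegrable f volume c d) (hg : HolderOnWith Nh β g (Icc c d)) :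
    Tendsto (dyadicSum (fun u v => g u • ∫ r in u..v, f r) c d) atTop
      (𝓝 (∫ r in c..d, g r • f r)) := by
  rw [tendsto_iff_norm_sub_tendsto_zero]
  refine squeeze_zero (fun _ => norm_nonneg _)
    (fun n => norm_dyadicSum_sub_integral_smul_le hcd hβ hf hg n) ?_
  have hmesh : Tendsto (fun n : ℕ => (d - c) / 2 ^ n) atTop (𝓝 0) := by
    simpa [div_eq_mul_inv, ← inv_pow] using
      (tendsto_pow_atTop_nhds_zero_of_lt_one (by norm_num)
        (by norm_num : (2 : ℝ)⁻¹ < 1)).const_mul (d - c)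
  simpa [zero_rpow (NNReal.coe_pos.2 hβ).ne'] using
    ((hmesh.rpow_const (Or.inr β.coe_nonneg)).const_mul (Nh : ℝ)).mul_const
      (∫ r in c..d, ‖f r‖)

lemma norm_smul_integral_midpoint_defect_le {K γ u v : ℝ} (huv : u ≤ v) (hβγ : 0 < β + γ)
    (hf : IntervalIntegrable f volume u v) (hg : HolderOnWith Nh β g (Icc u v))
    (hF : ‖∫ r in (u + v) / 2..v, f r‖ ≤ K * (v - (u + v) / 2) ^ γ) :
    ‖g u • (∫ r in u..(u + v) / 2, f r) + g ((u + v) / 2) • (∫ r in (u + v) / 2..v, f r) -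
        g u • ∫ r in u..v, f r‖ ≤ Nh * K * ((v - u) / 2) ^ (β + γ) := by
  have hm : (u + v) / 2 ∈ Icc u v := ⟨by linarith, by linarith⟩
  rw [show v - (u + v) / 2 = (v - u) / 2 by ring] at hF
  rw [← intervalIntegral.integral_add_adjacent_intervals (hf.mono_Icc (left_mem_Icc.2 huv) hm)
    (hf.mono_Icc hm (right_mem_Icc.2 huv)), smul_add, add_sub_add_left_eq_sub, ← sub_smul,
    norm_smul, Real.norm_eq_abs, ← Real.dist_eq]
  calc _ ≤ Nh * ((v - u) / 2) ^ (β : ℝ) * (K * ((v - u) / 2) ^ γ) := by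
        refine mul_le_mul (hg.dist_le_of_le hm (left_mem_Icc.2 huv) ?_) hF (norm_nonneg _)
          (by positivity)
        rw [Real.dist_eq, abs_of_nonneg (by linarith)]
        linarith
    _ = Nh * K * ((v - u) / 2) ^ (β + γ) := by
        rw [rpow_add' (by linarith) hβγ.ne']
        ring

theorem norm_integral_smul_le_of_holderOnWith {K γ : ℝ} (hcd : c ≤ d) (hβ : 0 < β)
    (hβγ : 1 < β + γ) (hf : IntervalIntegrable f volume c d)
    (hg : HolderOnWith Nh β g (Icc c d))
    (hF : ∀ u ∈ Icc c d, ∀ v ∈ Icc c d, u ≤ v → ‖∫ r in u..v, f r‖ ≤ K * (v - u) ^ γ) :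
    ‖∫ r in c..d, g r • f r‖ ≤
      (|g c| + Nh * (d - c) ^ (β : ℝ) / (2 ^ (β + γ) - 2)) * (K * (d - c) ^ γ) := by
  set Ξ : ℝ → ℝ → E := fun u v => g u • ∫ r in u..v, f r
  have hsew := norm_sub_le_of_tendsto_dyadicSum hcd hβγ
    (tendsto_dyadicSum_smul_integral hcd hβ hf hg) fun u hu v hv huv =>
      norm_smul_integral_midpoint_defect_le huv (by linarith) (hf.mono_Icc hu hv)
        (hg.mono (Icc_subset_Icc hu.1 hv.2))
        (hF _ ⟨by linarith [hu.1], by linarith [hv.2]⟩ v hv (by linarith))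
  have hcoarse : ‖Ξ c d‖ ≤ |g c| * (K * (d - c) ^ γ) := by
    rw [norm_smul, Real.norm_eq_abs]
    gcongr
    exact hF c (left_mem_Icc.2 hcd) d (right_mem_Icc.2 hcd) hcd
  calc ‖∫ r in c..d, g r • f r‖ ≤ ‖Ξ c d‖ + ‖Ξ c d - ∫ r in c..d, g r • f r‖ :=
        norm_le_insert _ _
    _ ≤ |g c| * (K * (d - c) ^ γ) + Nh * K * (d - c) ^ (β + γ) / (2 ^ (β + γ) - 2) :=
        add_le_add hcoarse hsew
    _ = _ := by
        rw [rpow_add' (sub_nonneg.2 hcd) (by linarith)]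
        ring

end Young

lemma exists_intervalIntegral_comp_eq_integral_abs_deriv_smul {E : Type*}
    [NormedAddCommGroup E] [NormedSpace ℝ E] {τ τ' σ : ℝ → ℝ} {s t : ℝ} (hst : s ≤ t)
    (hσ : ContinuousOn σ (Icc s t)) (hτσ : ∀ r ∈ Icc s t, τ (σ r) = r)
    (hτ : ∀ x ∈ σ '' Icc s t, HasDerivAt τ (τ' x) x) (F : ℝ → E) :
    ∃ a b, a ≤ b ∧ σ '' Icc s t = Icc a b ∧
      ∫ r in s..t, F (σ r) = ∫ x in a..b, |τ' x| • F x := by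
  obtain ⟨a, b, himg⟩ : ∃ a b, σ '' Icc s t = Icc a b := ⟨_, _, hσ.image_Icc hst⟩
  have hσs : σ s ∈ Icc a b := himg ▸ mem_image_of_mem σ (left_mem_Icc.2 hst)
  have hab : a ≤ b := hσs.1.trans hσs.2
  have hστ : ∀ x ∈ Icc a b, σ (τ x) = x := by
    rw [← himg]
    rintro _ ⟨r, hr, rfl⟩
    rw [hτσ r hr]
  have hinj : InjOn τ (Icc a b) := fun x hx y hy hxy => by
    rw [← hστ x hx, ← hστ y hy, hxy]
  have hτimg : τ '' Icc a b = Icc s t := by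
    rw [← himg, image_image, image_congr hτσ, image_id']
  refine ⟨a, b, hab, himg, ?_⟩
  calc ∫ r in s..t, F (σ r) = ∫ r in Icc s t, F (σ r) := by
        rw [intervalIntegral.integral_of_le hst, integral_Icc_eq_integral_Ioc]
    _ = ∫ x in Icc a b, |τ' x| • F (σ (τ x)) := by
        rw [← hτimg]
        exact integral_image_eq_integral_abs_deriv_smul measurableSet_Icc
          (fun x hx => (hτ x (himg ▸ hx)).hasDerivWithinAt) hinj _
    _ = ∫ x in Icc a b, |τ' x| • F x :=
        setIntegral_congr_fun measurableSet_Icc fun x hx => by rw [hστ x hx]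
    _ = ∫ x in a..b, |τ' x| • F x := by
        rw [intervalIntegral.integral_of_le hab, integral_Icc_eq_integral_Ioc]

lemma sub_le_mul_sub_of_image_Icc_eq {σ : ℝ → ℝ} {s t a b M : ℝ} (hM : 0 ≤ M)
    (hσ : ∀ r ∈ Icc s t, ∀ r' ∈ Icc s t, |σ r - σ r'| ≤ M * |r - r'|)
    (himg : σ '' Icc s t = Icc a b) (hab : a ≤ b) : b - a ≤ M * (t - s) := by
  obtain ⟨ra, hra, rfl⟩ : a ∈ σ '' Icc s t := himg ▸ left_mem_Icc.2 hab
  obtain ⟨rb, hrb, rfl⟩ : b ∈ σ '' Icc s t := himg ▸ right_mem_Icc.2 hab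
  calc σ rb - σ ra ≤ M * |rb - ra| := (le_abs_self _).trans (hσ rb hrb ra hra)
    _ ≤ M * (t - s) := by
        gcongr
        rw [abs_le]
        constructor <;> linarith [hra.1, hra.2, hrb.1, hrb.2]

lemma holderOnWith_abs_of_abs_sub_le {φ : ℝ → ℝ} {s : Set ℝ} {N β : ℝ} (hN : 0 ≤ N)
    (hβ : 0 ≤ β) (h : ∀ u ∈ s, ∀ v ∈ s, |φ v - φ u| ≤ N * |v - u| ^ β) :
    HolderOnWith N.toNNReal β.toNNReal (fun x => |φ x|) s := by
  refine holderOnWith_of_dist_le fun x hx y hy => ?_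
  rw [coe_toNNReal _ hN, coe_toNNReal _ hβ, Real.dist_eq, Real.dist_eq]
  exact (abs_abs_sub_abs_le_abs_sub _ _).trans (h y hy x hx)

lemma intervalIntegrable_exp_I_mul_inner {d : ℕ} {w : ℝ → EuclideanSpace ℝ (Fin d)}
    (hw : Measurable w) (ξ : EuclideanSpace ℝ (Fin d)) (a b : ℝ) :
    IntervalIntegrable (fun r => Complex.exp (Complex.I * ((inner ℝ ξ (w r) : ℝ) : ℂ)))
      volume a b :=
  (intervalIntegrable_const (c := (1 : ℝ))).mono_fun (by fun_prop)
    (ae_of_all _ fun r => by simp [Complex.norm_exp_I_mul_ofReal])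

namespace IsIrregularWith

variable {d : ℕ} {T γ ρ K : ℝ} {w : ℝ → EuclideanSpace ℝ (Fin d)}
  {ξ : EuclideanSpace ℝ (Fin d)}

lemma mul_norm_rpow_nonneg (h : IsIrregularWith T γ ρ K w) (hT : 0 < T) (hξ : ξ ≠ 0) :
    0 ≤ K * ‖ξ‖ ^ (-ρ) := by
  have := (norm_nonneg _).trans (h ξ hξ 0 T le_rfl hT.le le_rfl)
  exact nonneg_of_mul_nonneg_left this (rpow_pos_of_pos (by linarith) _)

lemma norm_integral_smul_le {g : ℝ → ℝ} {a b : ℝ} {Nh β : ℝ≥0}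
    (h : IsIrregularWith T γ ρ K w) (hw : Measurable w) (hξ : ξ ≠ 0) (hab : a ≤ b)
    (habT : Icc a b ⊆ Icc 0 T) (hβ : 0 < β) (hβγ : 1 < β + γ)
    (hg : HolderOnWith Nh β g (Icc a b)) :
    ‖∫ r in a..b, g r • Complex.exp (Complex.I * ((inner ℝ ξ (w r) : ℝ) : ℂ))‖ ≤
      (|g a| + Nh * (b - a) ^ (β : ℝ) / (2 ^ (β + γ) - 2)) *
        (K * ‖ξ‖ ^ (-ρ) * (b - a) ^ γ) :=
  norm_integral_smul_le_of_holderOnWith hab hβ hβγ (intervalIntegrable_exp_I_mul_inner hw ξ a b)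
    hg fun u hu v hv huv => h ξ hξ u v (habT hu).1 huv (habT hv).2

end IsIrregularWith

theorem reparametrization_isIrregular_general {T γ ρ β : ℝ} (hT : 0 < T) (hγ : 0 < γ)
    (hγ1 : γ ≤ 1) (hβ : 0 < β) (hβγ : 1 < β + γ) :
    ∃ C : ℝ, 0 < C ∧ ∀ (d : ℕ) (w : ℝ → EuclideanSpace ℝ (Fin d)), Measurable w →
      ∀ K : ℝ, IsIrregularWith T γ ρ K w →
      ∀ (τ τ' σ : ℝ → ℝ) (N M : ℝ), 1 ≤ N → 1 ≤ M →
        (∀ u ∈ Set.Icc (0 : ℝ) T, HasDerivAt τ (τ' u) u) →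
        (∀ u ∈ Set.Icc (0 : ℝ) T, |τ' u| ≤ N) →
        (∀ u ∈ Set.Icc (0 : ℝ) T, ∀ v ∈ Set.Icc (0 : ℝ) T,
          |τ' v - τ' u| ≤ N * |v - u| ^ β) →
        (∀ r ∈ Set.Icc (τ 0) (τ T), τ (σ r) = r ∧ σ r ∈ Set.Icc (0 : ℝ) T) →
        (∀ r ∈ Set.Icc (τ 0) (τ T), ∀ r' ∈ Set.Icc (τ 0) (τ T),
          |σ r - σ r'| ≤ M * |r - r'|) →
      ∀ ξ : EuclideanSpace ℝ (Fin d), ξ ≠ 0 → ∀ s t : ℝ, τ 0 ≤ s → s ≤ t → t ≤ τ T →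
        ‖∫ r in s..t, Complex.exp (Complex.I * ((inner ℝ ξ (w (σ r)) : ℝ) : ℂ))‖
          ≤ C * M * N * K * (t - s) ^ γ * ‖ξ‖ ^ (-ρ) := by
  have hD : 0 < (2 : ℝ) ^ (β + γ) - 2 := sub_pos.2 (two_lt_two_rpow hβγ)
  -- `T ^ β` bounds the factor `(b - a) ^ β` of the Young estimate, as `[a, b] ⊆ [0, T]`.
  refine ⟨1 + T ^ β / (2 ^ (β + γ) - 2),
    add_pos_of_pos_of_nonneg one_pos (div_nonneg (rpow_nonneg hT.le _) hD.le), ?_⟩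
  intro d w hw K hirr τ τ' σ N M hN hM hτ hτ'_le hτ'_holder hσ hσ_lip ξ hξ s t hs hst ht
  have hIcc : Icc s t ⊆ Icc (τ 0) (τ T) := Icc_subset_Icc hs ht
  have hσ_lip' : ∀ r ∈ Icc s t, ∀ r' ∈ Icc s t, |σ r - σ r'| ≤ M * |r - r'| :=
    fun r hr r' hr' => hσ_lip r (hIcc hr) r' (hIcc hr')
  have hσ_img : σ '' Icc s t ⊆ Icc 0 T := image_subset_iff.2 fun r hr => (hσ r (hIcc hr)).2
  obtain ⟨a, b, hab, himg, hcov⟩ := exists_intervalIntegral_comp_eq_integral_abs_deriv_smul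
    hst (LipschitzOnWith.of_dist_le' hσ_lip').continuousOn (fun r hr => (hσ r (hIcc hr)).1)
    (fun x hx => hτ x (hσ_img hx))
    (fun x => Complex.exp (Complex.I * ((inner ℝ ξ (w x) : ℝ) : ℂ)))
  rw [himg] at hσ_img
  have hba := sub_le_mul_sub_of_image_Icc_eq (by linarith) hσ_lip' himg hab
  have hYoung := hirr.norm_integral_smul_le hw hξ hab hσ_img (by simpa using hβ)
    (by rwa [coe_toNNReal _ hβ.le])
    ((holderOnWith_abs_of_abs_sub_le (by linarith) hβ.le hτ'_holder).mono hσ_img)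
  rw [coe_toNNReal _ hβ.le, coe_toNNReal _ (by linarith), abs_abs] at hYoung
  have hK' := hirr.mul_norm_rpow_nonneg hT hξ
  rw [hcov]
  calc _ ≤ _ := hYoung
    _ ≤ (N + N * T ^ β / (2 ^ (β + γ) - 2)) * (K * ‖ξ‖ ^ (-ρ) * (M * (t - s) ^ γ)) := by
        gcongr
        · exact hτ'_le a (hσ_img (left_mem_Icc.2 hab))
        · linarith [(hσ_img (left_mem_Icc.2 hab)).1, (hσ_img (right_mem_Icc.2 hab)).2]
        · exact rpow_le_mul_rpow_of_le_mul (by linarith) (by linarith) hM hγ.le hγ1 hba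
    _ = _ := by ring

/-- Invariance under smooth reparametrization: let `w` be `(γ,ρ)`-irregular with
constant `K` on `[0,T]` and let `τ : [0,T] → [τ(0),τ(T)]` be a `C^{1+β}`-diffeomorphism
(`β + γ > 1`), with derivative `τ'` bounded and `β`-Hölder with constant `N` and
inverse `σ` Lipschitz with constant `M` (so `N ≤ ‖τ‖_{C^{1+β}}`,
`M ≤ ‖τ^{-1}‖_{C^{1+β}}`).  Then `w̃ = w ∘ σ` is `(γ,ρ)`-irregular on `[τ(0),τ(T)]`
with `‖Φ^{w̃}‖_{W^{γ,ρ}} ≲ M N K`. -/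
theorem reparametrization_isIrregular {T γ ρ β : ℝ} (hT : 0 < T) (hγ : 0 < γ)
    (hγ1 : γ ≤ 1) (hρ : 0 < ρ) (hβ : 0 < β) (hβγ : 1 < β + γ) :
    ∃ C : ℝ, 0 < C ∧ ∀ (d : ℕ) (w : ℝ → EuclideanSpace ℝ (Fin d)), Measurable w →
      ∀ K : ℝ, IsIrregularWith T γ ρ K w →
      ∀ (τ τ' σ : ℝ → ℝ) (N M : ℝ), 1 ≤ N → 1 ≤ M →
        (∀ u ∈ Set.Icc (0 : ℝ) T, HasDerivAt τ (τ' u) u) →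
        (∀ u ∈ Set.Icc (0 : ℝ) T, |τ' u| ≤ N) →
        (∀ u ∈ Set.Icc (0 : ℝ) T, ∀ v ∈ Set.Icc (0 : ℝ) T,
          |τ' v - τ' u| ≤ N * |v - u| ^ β) →
        (∀ r ∈ Set.Icc (τ 0) (τ T), τ (σ r) = r ∧ σ r ∈ Set.Icc (0 : ℝ) T) →
        (∀ r ∈ Set.Icc (τ 0) (τ T), ∀ r' ∈ Set.Icc (τ 0) (τ T),
          |σ r - σ r'| ≤ M * |r - r'|) →
      ∀ ξ : EuclideanSpace ℝ (Fin d), ξ ≠ 0 → ∀ s t : ℝ, τ 0 ≤ s → s ≤ t → t ≤ τ T →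
        ‖∫ r in s..t, Complex.exp (Complex.I * ((inner ℝ ξ (w (σ r)) : ℝ) : ℂ))‖
          ≤ C * M * N * K * (t - s) ^ γ * ‖ξ‖ ^ (-ρ) :=
  reparametrization_isIrregular_general hT hγ hγ1 hβ hβγ
end
end

section
/- Nowhere Hölder continuity from irregularity (density version): let w : [0,T] → ℝ^d be (γ,ρ)-irregular and let δ > (1−γ)/ρ, so that there exists q with d/q < ρ and γ + δd/q > 1. Then for any M > 0 and any s ∈ (0,T), the set of times t near s satisfying the approximate Hölder condition has zero density: lim_{ε→0⁺} (1/(2ε)) · Leb{t ∈ (s−ε,s+ε) : |w_t − w_s| ≤ M|t−s|^δ} = 0. In particular w is nowhere δ-Hölder continuous. -/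
open MeasureTheory Real

noncomputable section

section Helpers
open Complex

lemma gauss_integrable (d : ℕ) :
    Integrable (fun ξ : EuclideanSpace ℝ (Fin d) => rexp (-(π * ‖ξ‖ ^ 2))) := by
  have hb : (0:ℝ) < (↑π : ℂ).re := by simpa using pi_pos
  have h := (GaussianFourier.integrable_cexp_neg_mul_sq_norm_add_of_euclideanSpace
    (ι := Fin d) hb 0 0).norm
  refine h.congr (Filter.Eventually.of_forall fun ξ => ?_)
  simp only [zero_mul, add_zero]
  rw [show -(↑π:ℂ) * ↑‖ξ‖ ^ 2 = ((-(π * ‖ξ‖ ^ 2) : ℝ) : ℂ) by push_cast; ring,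
    Complex.norm_exp, Complex.ofReal_re]

lemma gauss_integral (d : ℕ) :
    ∫ ξ : EuclideanSpace ℝ (Fin d), rexp (-(π * ‖ξ‖ ^ 2)) = 1 := by
  have hb : (0:ℝ) < (↑π : ℂ).re := by simpa using pi_pos
  have h := GaussianFourier.integral_cexp_neg_mul_sq_norm_add_of_euclideanSpace
    (ι := Fin d) hb 0 (0 : EuclideanSpace ℝ (Fin d))
  simp only [zero_mul, add_zero] at h
  rw [div_self (by exact_mod_cast Real.pi_ne_zero), one_cpow] at h
  norm_num at h
  have h2 : ∫ ξ : EuclideanSpace ℝ (Fin d), ((rexp (-(π * ‖ξ‖ ^ 2)) : ℝ) : ℂ) = 1 := by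
    rw [← h]
    congr 1 with ξ
    rw [Complex.ofReal_exp]
    congr 1
    push_cast
    ring
  have h3 : ∫ ξ : EuclideanSpace ℝ (Fin d), ((rexp (-(π * ‖ξ‖ ^ 2)) : ℝ) : ℂ)
      = ((∫ ξ : EuclideanSpace ℝ (Fin d), rexp (-(π * ‖ξ‖ ^ 2)) : ℝ) : ℂ) :=
    Complex.ofRealCLM.integral_comp_comm (gauss_integrable d)
  rw [h3] at h2
  exact_mod_cast h2

lemma gauss_inversion (d : ℕ) (c : ℝ) (v : EuclideanSpace ℝ (Fin d)) :
    ∫ ξ : EuclideanSpace ℝ (Fin d),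
        Complex.exp ((-(π * ‖ξ‖ ^ 2) : ℝ) : ℂ) *
          Complex.exp (((c * (inner ℝ ξ v : ℝ) : ℝ) : ℂ) * Complex.I) =
      Complex.exp ((-(c ^ 2 * ‖v‖ ^ 2 / (4 * π)) : ℝ) : ℂ) := by
  have hb : (0:ℝ) < (↑π : ℂ).re := by simpa using pi_pos
  have h := GaussianFourier.integral_cexp_neg_mul_sq_norm_add_of_euclideanSpace
    (ι := Fin d) hb ((c : ℂ) * Complex.I) v
  have hL : ∀ ξ : EuclideanSpace ℝ (Fin d),
      Complex.exp ((-(π * ‖ξ‖ ^ 2) : ℝ) : ℂ) *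
          Complex.exp (((c * (inner ℝ ξ v : ℝ) : ℝ) : ℂ) * Complex.I) =
      Complex.exp (-(π:ℂ) * ‖ξ‖ ^ 2 + ((c : ℂ) * Complex.I) * ((inner ℝ v ξ : ℝ) : ℂ)) := by
    intro ξ
    rw [← Complex.exp_add]
    congr 1
    rw [real_inner_comm v ξ]
    push_cast
    ring
  calc ∫ ξ : EuclideanSpace ℝ (Fin d),
        Complex.exp ((-(π * ‖ξ‖ ^ 2) : ℝ) : ℂ) *
          Complex.exp (((c * (inner ℝ ξ v : ℝ) : ℝ) : ℂ) * Complex.I)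
      = ∫ ξ : EuclideanSpace ℝ (Fin d),
          Complex.exp (-(π:ℂ) * ‖ξ‖ ^ 2 + ((c : ℂ) * Complex.I) * ((inner ℝ v ξ : ℝ) : ℂ)) := by
        congr 1 with ξ; exact hL ξ
    _ = (↑π / ↑π) ^ ((Fintype.card (Fin d) : ℂ) / 2) *
          Complex.exp (((c : ℂ) * Complex.I) ^ 2 * ‖v‖ ^ 2 / (4 * ↑π)) := by
        exact_mod_cast h
    _ = Complex.exp ((-(c ^ 2 * ‖v‖ ^ 2 / (4 * π)) : ℝ) : ℂ) := by
        rw [div_self (by exact_mod_cast Real.pi_ne_zero), one_cpow, one_mul]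
        congr 1
        rw [mul_pow, Complex.I_sq]
        push_cast
        ring

lemma key_bound {d : ℕ} {T γ ρ K : ℝ} (hγ0 : 0 < γ) (hρ : 0 < ρ) (hK0 : 0 ≤ K)
    {w : ℝ → EuclideanSpace ℝ (Fin d)} (hw : Measurable w) (hK : IsIrregularWith T γ ρ K w)
    {s ε r R : ℝ} (hε : 0 < ε) (hs0 : 0 ≤ s - ε) (hsT : s + ε ≤ T) (hr : 0 < r) (hR : 0 < R) :
    (volume {t | t ∈ Set.Ioo (s - ε) (s + ε) ∧ ‖w t - w s‖ ≤ r}).toReal ≤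
      Real.exp π * (2 * ε * (volume (Metric.ball (0 : EuclideanSpace ℝ (Fin d)) R)).toReal
        + K * (2 * π / r) ^ (-ρ) * R ^ (-ρ) * (2 * ε) ^ γ) := by
  set c : ℝ := -(2 * π) / r with hc_def
  have hc_neg : c < 0 := div_neg_of_neg_of_pos (neg_lt_zero.mpr (by positivity)) hr
  have hc2 : c ^ 2 = 4 * π ^ 2 / r ^ 2 := by rw [hc_def, div_pow]; ring_nf
  set I2 := Set.Ioo (s - ε) (s + ε) with hI2_def
  set A := {t | t ∈ I2 ∧ ‖w t - w s‖ ≤ r} with hA_def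
  have hA_sub : A ⊆ I2 := fun t ht => ht.1
  have hI2vol : volume I2 = ENNReal.ofReal (2 * ε) := by
    rw [hI2_def, Real.volume_Ioo]; congr 1; ring
  have hI2fin : volume I2 < ⊤ := by rw [hI2vol]; exact ENNReal.ofReal_lt_top
  haveI : Fact (volume I2 < ⊤) := ⟨hI2fin⟩
  have hAfin : volume A < ⊤ := lt_of_le_of_lt (measure_mono hA_sub) hI2fin
  have hn : Measurable fun t => ‖w t - w s‖ := (hw.sub measurable_const).norm
  have hAm : MeasurableSet A :=
    measurableSet_Ioo.inter (measurableSet_le hn measurable_const)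
  -- the real Gaussian minorant
  set g : ℝ → ℝ := fun t => rexp (-(c ^ 2 * ‖w t - w s‖ ^ 2 / (4 * π))) with hg_def
  have hg_meas : Measurable g :=
    Real.measurable_exp.comp ((((hn.pow_const 2).const_mul (c ^ 2)).div_const (4 * π)).neg)
  have hg_le_one : ∀ t, g t ≤ 1 := fun t =>
    Real.exp_le_one_iff.2 (neg_nonpos.2 (by positivity))
  have hg_int : IntegrableOn g I2 := by
    refine Integrable.mono' (integrable_const (1 : ℝ)) hg_meas.aestronglyMeasurable
      (Filter.Eventually.of_forall fun t => ?_)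
    rw [Real.norm_eq_abs, abs_of_pos (Real.exp_pos _)]
    exact hg_le_one t
  -- Step 1
  have hpt1 : ∀ t ∈ A, (1 : ℝ) ≤ rexp π * g t := by
    intro t ht
    have hle : ‖w t - w s‖ ≤ r := ht.2
    have h1 : c ^ 2 * ‖w t - w s‖ ^ 2 / (4 * π) ≤ π := by
      rw [hc2, div_le_iff₀ (by positivity)]
      have hsq : ‖w t - w s‖ ^ 2 ≤ r ^ 2 := pow_le_pow_left₀ (norm_nonneg _) hle 2
      calc 4 * π ^ 2 / r ^ 2 * ‖w t - w s‖ ^ 2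
          ≤ 4 * π ^ 2 / r ^ 2 * r ^ 2 := by
            exact mul_le_mul_of_nonneg_left hsq (by positivity)
        _ = π * (4 * π) := by field_simp
    calc (1 : ℝ) = rexp π * rexp (-π) := by rw [← Real.exp_add]; simp
      _ ≤ rexp π * g t := by
          refine mul_le_mul_of_nonneg_left ?_ (Real.exp_pos π).le
          exact Real.exp_le_exp.2 (by linarith)
  have step1 : (volume A).toReal ≤ rexp π * ∫ t in I2, g t := by
    have e1 : (volume A).toReal = ∫ _ in A, (1 : ℝ) := by rw [setIntegral_const]; simp; rfl
    rw [e1]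
    calc ∫ _ in A, (1 : ℝ) ≤ ∫ t in A, rexp π * g t :=
          setIntegral_mono_on (integrableOn_const hAfin.ne)
            ((show IntegrableOn (fun t => rexp π * g t) I2 volume from hg_int.const_mul (rexp π)).mono_set hA_sub) hAm hpt1
      _ ≤ ∫ t in I2, rexp π * g t :=
          setIntegral_mono_set (hg_int.const_mul _)
            (Filter.Eventually.of_forall fun t => by positivity)
            (HasSubset.Subset.eventuallyLE hA_sub)
      _ = rexp π * ∫ t in I2, g t := integral_const_mul _ _
  -- the complex integrand
  set Hf : ℝ → EuclideanSpace ℝ (Fin d) → ℂ := fun t ξ =>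
    Complex.exp ((-(π * ‖ξ‖ ^ 2) : ℝ) : ℂ) *
      Complex.exp (((c * (inner ℝ ξ (w t - w s) : ℝ) : ℝ) : ℂ) * Complex.I) with hHf_def
  have hHnorm : ∀ t ξ, ‖Hf t ξ‖ = rexp (-(π * ‖ξ‖ ^ 2)) := by
    intro t ξ
    rw [hHf_def]
    rw [norm_mul, Complex.norm_exp_ofReal_mul_I, mul_one,
      Complex.norm_exp, Complex.ofReal_re]
  have hH_meas : Measurable (Function.uncurry Hf) := by
    apply Measurable.mul
    · refine Complex.measurable_exp.comp (Complex.measurable_ofReal.comp ?_)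
      exact (((measurable_snd.norm).pow_const 2).const_mul π).neg
    · refine Complex.measurable_exp.comp (Measurable.mul ?_ measurable_const)
      refine Complex.measurable_ofReal.comp ?_
      exact (Measurable.inner (𝕜 := ℝ) measurable_snd
        ((hw.comp measurable_fst).sub measurable_const)).const_mul c
  have hH_int : Integrable (Function.uncurry Hf) ((volume.restrict I2).prod volume) := by
    refine Integrable.mono' ((integrable_const (1 : ℝ)).mul_prod (gauss_integrable d))
      hH_meas.aestronglyMeasurable (Filter.Eventually.of_forall fun p => ?_)
    show ‖Hf p.1 p.2‖ ≤ 1 * rexp (-(π * ‖p.2‖ ^ 2))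
    rw [hHnorm, one_mul]
  set F : EuclideanSpace ℝ (Fin d) → ℂ := fun ξ => ∫ t in I2, Hf t ξ with hF_def
  have hF_int : Integrable F := hH_int.integral_prod_right
  have hswap : ∫ t in I2, (∫ ξ : EuclideanSpace ℝ (Fin d), Hf t ξ)
      = ∫ ξ : EuclideanSpace ℝ (Fin d), F ξ := integral_integral_swap hH_int
  have hinv : ∀ t, (∫ ξ : EuclideanSpace ℝ (Fin d), Hf t ξ) = ((g t : ℝ) : ℂ) := by
    intro t
    rw [hHf_def]
    rw [gauss_inversion d c (w t - w s), hg_def]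
    exact (Complex.ofReal_exp _).symm
  -- Step 2
  have step2 : ∫ t in I2, g t ≤ ‖∫ ξ : EuclideanSpace ℝ (Fin d), F ξ‖ := by
    have e2 : ((∫ t in I2, g t : ℝ) : ℂ) = ∫ t in I2, ((g t : ℝ) : ℂ) :=
      (Complex.ofRealCLM.integral_comp_comm hg_int).symm
    have e3 : (fun t => ((g t : ℝ) : ℂ)) = fun t => ∫ ξ : EuclideanSpace ℝ (Fin d), Hf t ξ :=
      funext fun t => (hinv t).symm
    calc ∫ t in I2, g t = (((∫ t in I2, g t : ℝ) : ℂ)).re := by rw [Complex.ofReal_re]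
      _ = (∫ ξ : EuclideanSpace ℝ (Fin d), F ξ).re := by rw [e2]; rw [show (∫ t in I2, ((g t : ℝ) : ℂ)) = ∫ ξ : EuclideanSpace ℝ (Fin d), F ξ from by rw [show (fun t => ((g t : ℝ) : ℂ)) = fun t => ∫ ξ : EuclideanSpace ℝ (Fin d), Hf t ξ from e3]; exact hswap]
      _ ≤ ‖∫ ξ : EuclideanSpace ℝ (Fin d), F ξ‖ := by
          exact Complex.re_le_norm _
  -- splitting
  have hsplit : ∫ ξ : EuclideanSpace ℝ (Fin d), F ξ
      = (∫ ξ in Metric.ball (0 : EuclideanSpace ℝ (Fin d)) R, F ξ)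
        + ∫ ξ in (Metric.ball (0 : EuclideanSpace ℝ (Fin d)) R)ᶜ, F ξ :=
    (integral_add_compl measurableSet_ball hF_int).symm
  -- ball bound
  have hFnorm_le : ∀ ξ : EuclideanSpace ℝ (Fin d), ‖F ξ‖ ≤ 2 * ε := by
    intro ξ
    have h1 : ‖F ξ‖ ≤ 1 * (volume I2).toReal := by
      refine norm_setIntegral_le_of_norm_le_const hI2fin (fun t _ => ?_)
      · rw [hHnorm]
        exact Real.exp_le_one_iff.2 (neg_nonpos.2 (by positivity))
    rwa [one_mul, hI2vol, ENNReal.toReal_ofReal (by positivity)] at h1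
  have hball : ‖∫ ξ in Metric.ball (0 : EuclideanSpace ℝ (Fin d)) R, F ξ‖
      ≤ 2 * ε * (volume (Metric.ball (0 : EuclideanSpace ℝ (Fin d)) R)).toReal :=
    norm_setIntegral_le_of_norm_le_const measure_ball_lt_top (fun ξ _ => hFnorm_le ξ)
  -- complement bound
  set B : ℝ := K * (2 * π / r) ^ (-ρ) * R ^ (-ρ) * (2 * ε) ^ γ with hB_def
  have hB0 : 0 ≤ B :=
    mul_nonneg (mul_nonneg (mul_nonneg hK0 (Real.rpow_nonneg (by positivity) _))
      (Real.rpow_nonneg hR.le _)) (Real.rpow_nonneg (by positivity) _)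
  have hFfact : ∀ ξ : EuclideanSpace ℝ (Fin d),
      ξ ∈ (Metric.ball (0 : EuclideanSpace ℝ (Fin d)) R)ᶜ →
      ‖F ξ‖ ≤ B * rexp (-(π * ‖ξ‖ ^ 2)) := by
    intro ξ hξ
    have hRξ : R ≤ ‖ξ‖ := by
      have h' : ¬ dist ξ 0 < R := by simpa [Metric.mem_ball] using hξ
      rw [dist_zero_right] at h'
      linarith [not_lt.1 h']
    have hξ0 : ξ ≠ 0 := by
      intro h0
      rw [h0, norm_zero] at hRξ
      linarith
    have hcξ : c • ξ ≠ 0 := smul_ne_zero (ne_of_lt hc_neg) hξ0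
    have h1 : ∀ t, Hf t ξ =
        (Complex.exp ((-(π * ‖ξ‖ ^ 2) : ℝ) : ℂ) *
          Complex.exp (((-(c * (inner ℝ ξ (w s) : ℝ)) : ℝ) : ℂ) * Complex.I)) *
        Complex.exp (((c * (inner ℝ ξ (w t) : ℝ) : ℝ) : ℂ) * Complex.I) := by
      intro t
      simp only [hHf_def, inner_sub_right]
      rw [mul_assoc]
      congr 1
      rw [← Complex.exp_add]
      congr 1
      push_cast
      ring
    have hfac : F ξ =
        (Complex.exp ((-(π * ‖ξ‖ ^ 2) : ℝ) : ℂ) *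
          Complex.exp (((-(c * (inner ℝ ξ (w s) : ℝ)) : ℝ) : ℂ) * Complex.I)) *
        phiW w (c • ξ) (s - ε) (s + ε) := by
      rw [hF_def]
      calc (∫ t in I2, Hf t ξ)
          = ∫ t in I2, (Complex.exp ((-(π * ‖ξ‖ ^ 2) : ℝ) : ℂ) *
              Complex.exp (((-(c * (inner ℝ ξ (w s) : ℝ)) : ℝ) : ℂ) * Complex.I)) *
              Complex.exp (((c * (inner ℝ ξ (w t) : ℝ) : ℝ) : ℂ) * Complex.I) := by
            exact integral_congr_ae (Filter.Eventually.of_forall fun t => h1 t)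
        _ = (Complex.exp ((-(π * ‖ξ‖ ^ 2) : ℝ) : ℂ) *
              Complex.exp (((-(c * (inner ℝ ξ (w s) : ℝ)) : ℝ) : ℂ) * Complex.I)) *
              ∫ t in I2, Complex.exp (((c * (inner ℝ ξ (w t) : ℝ) : ℝ) : ℂ) * Complex.I) :=
            integral_const_mul _ _
        _ = _ := by
            congr 1
            rw [phiW, intervalIntegral.integral_of_le (by linarith), integral_Ioc_eq_integral_Ioo]
            refine integral_congr_ae (Filter.Eventually.of_forall fun t => ?_)
            show Complex.exp (((c * (inner ℝ ξ (w t) : ℝ) : ℝ) : ℂ) * Complex.I)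
              = Complex.exp (Complex.I * ((inner ℝ (c • ξ) (w t) : ℝ) : ℂ))
            rw [real_inner_smul_left]
            ring_nf
    have hphi := hK (c • ξ) hcξ (s - ε) (s + ε) hs0 (by linarith) hsT
    rw [show s + ε - (s - ε) = 2 * ε by ring] at hphi
    have hnorm_smul : ‖c • ξ‖ = 2 * π / r * ‖ξ‖ := by
      rw [norm_smul, Real.norm_eq_abs, abs_of_neg hc_neg, hc_def, neg_div, neg_neg]
    have hphi2 : ‖phiW w (c • ξ) (s - ε) (s + ε)‖ ≤ B := by
      refine le_trans hphi ?_
      rw [hB_def, hnorm_smul, Real.mul_rpow (by positivity) (norm_nonneg _)]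
      have hx : ‖ξ‖ ^ (-ρ) ≤ R ^ (-ρ) :=
        Real.rpow_le_rpow_of_nonpos hR hRξ (neg_nonpos.2 hρ.le)
      calc K * ((2 * π / r) ^ (-ρ) * ‖ξ‖ ^ (-ρ)) * (2 * ε) ^ γ
          ≤ K * ((2 * π / r) ^ (-ρ) * R ^ (-ρ)) * (2 * ε) ^ γ := by
            refine mul_le_mul_of_nonneg_right (mul_le_mul_of_nonneg_left
              (mul_le_mul_of_nonneg_left hx (Real.rpow_nonneg (by positivity) _)) hK0)
              (Real.rpow_nonneg (by positivity) _)
        _ = K * (2 * π / r) ^ (-ρ) * R ^ (-ρ) * (2 * ε) ^ γ := by ring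
    rw [hfac, norm_mul, norm_mul, Complex.norm_exp_ofReal_mul_I, mul_one,
      Complex.norm_exp, Complex.ofReal_re, mul_comm B _]
    exact mul_le_mul_of_nonneg_left hphi2 (Real.exp_pos _).le
  have hcompl : ‖∫ ξ in (Metric.ball (0 : EuclideanSpace ℝ (Fin d)) R)ᶜ, F ξ‖ ≤ B := by
    calc ‖∫ ξ in (Metric.ball (0 : EuclideanSpace ℝ (Fin d)) R)ᶜ, F ξ‖
        ≤ ∫ ξ in (Metric.ball (0 : EuclideanSpace ℝ (Fin d)) R)ᶜ, ‖F ξ‖ :=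
          norm_integral_le_integral_norm _
      _ ≤ ∫ ξ in (Metric.ball (0 : EuclideanSpace ℝ (Fin d)) R)ᶜ,
            B * rexp (-(π * ‖ξ‖ ^ 2)) :=
          setIntegral_mono_on hF_int.norm.integrableOn
            (((gauss_integrable d).const_mul B).integrableOn) measurableSet_ball.compl hFfact
      _ ≤ ∫ ξ : EuclideanSpace ℝ (Fin d), B * rexp (-(π * ‖ξ‖ ^ 2)) :=
          setIntegral_le_integral ((gauss_integrable d).const_mul B)
            (Filter.Eventually.of_forall fun ξ => mul_nonneg hB0 (Real.exp_pos _).le)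
      _ = B := by rw [integral_const_mul, gauss_integral d, mul_one]
  calc (volume A).toReal ≤ rexp π * ∫ t in I2, g t := step1
    _ ≤ rexp π * ‖∫ ξ : EuclideanSpace ℝ (Fin d), F ξ‖ :=
        mul_le_mul_of_nonneg_left step2 (Real.exp_pos π).le
    _ ≤ rexp π * (2 * ε * (volume (Metric.ball (0 : EuclideanSpace ℝ (Fin d)) R)).toReal + B) := by
        refine mul_le_mul_of_nonneg_left ?_ (Real.exp_pos π).le
        rw [hsplit]
        exact le_trans (norm_add_le _ _) (add_le_add hball hcompl)
    _ = _ := by rw [hB_def]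

end Helpers

/-- Nowhere Hölder continuity from irregularity (density version): if `w` is
`(γ,ρ)`-irregular and `δ > (1−γ)/ρ`, then for any `M > 0` and `s ∈ (0,T)` the set of
times `t` near `s` satisfying the approximate `δ`-Hölder condition with constant `M`
has zero density at `s`; in particular `w` is nowhere `δ`-Hölder continuous on
`(0,T)`. -/
theorem zero_density_nowhere_Holder {d : ℕ} {T γ ρ δ : ℝ} (hd : 0 < d) (hT : 0 < T)
    (hγ : γ ∈ Set.Ioo (0 : ℝ) 1) (hρ : 0 < ρ) (hδ : (1 - γ) / ρ < δ)
    (w : ℝ → EuclideanSpace ℝ (Fin d)) (hw : Measurable w)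
    (K : ℝ) (hK : IsIrregularWith T γ ρ K w) :
    (∀ M : ℝ, 0 < M → ∀ s ∈ Set.Ioo (0 : ℝ) T,
      Filter.Tendsto (fun ε : ℝ =>
          (volume {t | t ∈ Set.Ioo (s - ε) (s + ε) ∧
            ‖w t - w s‖ ≤ M * |t - s| ^ δ}).toReal / (2 * ε))
        (nhdsWithin 0 (Set.Ioi 0)) (nhds 0)) ∧
    (∀ s ∈ Set.Ioo (0 : ℝ) T, ¬ ∃ M > (0 : ℝ), ∃ ε > (0 : ℝ),
      ∀ t ∈ Set.Icc (0 : ℝ) T, |t - s| < ε → ‖w t - w s‖ ≤ M * |t - s| ^ δ) := by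
  obtain ⟨hγ0, hγ1⟩ := hγ
  have hδ0 : 0 < δ := lt_trans (div_pos (by linarith) hρ) hδ
  have hδρ : 1 - γ < δ * ρ := by
    rw [div_lt_iff₀ hρ] at hδ; linarith
  -- K ≥ 0
  have hK0 : 0 ≤ K := by
    have hne : (EuclideanSpace.single (⟨0, hd⟩ : Fin d) (1 : ℝ)) ≠ 0 := by
      intro h
      have := congrArg (fun v => v (⟨0, hd⟩ : Fin d)) h
      simpa using this
    have h1 := hK _ hne 0 T le_rfl hT.le le_rfl
    have h2 : (0 : ℝ) ≤ ‖phiW w (EuclideanSpace.single (⟨0, hd⟩ : Fin d) (1 : ℝ)) 0 T‖ :=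
      norm_nonneg _
    rw [EuclideanSpace.norm_single, norm_one, Real.one_rpow, mul_one, sub_zero] at h1
    nlinarith [Real.rpow_pos_of_pos hT γ]
  -- Part 1
  have part1 : ∀ M : ℝ, 0 < M → ∀ s ∈ Set.Ioo (0 : ℝ) T,
      Filter.Tendsto (fun ε : ℝ =>
          (volume {t | t ∈ Set.Ioo (s - ε) (s + ε) ∧
            ‖w t - w s‖ ≤ M * |t - s| ^ δ}).toReal / (2 * ε))
        (nhdsWithin 0 (Set.Ioi 0)) (nhds 0) := by
    intro M hM s hs
    obtain ⟨hs0, hsT⟩ := hs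
    haveI : Nonempty (Fin d) := ⟨⟨0, hd⟩⟩
    set κ : ℝ := (δ * ρ + γ - 1) / (2 * ρ) with hκ_def
    have hκ : 0 < κ := div_pos (by linarith) (by linarith)
    set Cd : ℝ := Real.sqrt π ^ d / Real.Gamma (d / 2 + 1) with hCd_def
    have hCd0 : 0 ≤ Cd :=
      div_nonneg (pow_nonneg (Real.sqrt_nonneg _) _)
        (Real.Gamma_pos_of_pos (by positivity)).le
    set D1 : ℝ := Real.exp π * Cd with hD1_def
    set D2 : ℝ := Real.exp π * (K * (2 * π) ^ (-ρ) * M ^ ρ * 2 ^ γ) / 2 with hD2_def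
    set ε0 : ℝ := min s (T - s) with hε0_def
    have hε0 : 0 < ε0 := lt_min hs0 (by linarith)
    -- eventual bound
    have hbound : ∀ ε ∈ Set.Ioo (0 : ℝ) ε0,
        (volume {t | t ∈ Set.Ioo (s - ε) (s + ε) ∧
          ‖w t - w s‖ ≤ M * |t - s| ^ δ}).toReal / (2 * ε)
          ≤ D1 * ε ^ (κ * d) + D2 * ε ^ (κ * ρ) := by
      intro ε hε
      obtain ⟨hε1, hε2⟩ := hε
      have hεs : ε < s := lt_of_lt_of_le hε2 (min_le_left _ _)
      have hεT : ε < T - s := lt_of_lt_of_le hε2 (min_le_right _ _)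
      have hr : 0 < M * ε ^ δ := by positivity
      have hR : 0 < ε ^ κ := Real.rpow_pos_of_pos hε1 κ
      -- subset
      have hsub : {t | t ∈ Set.Ioo (s - ε) (s + ε) ∧ ‖w t - w s‖ ≤ M * |t - s| ^ δ}
          ⊆ {t | t ∈ Set.Ioo (s - ε) (s + ε) ∧ ‖w t - w s‖ ≤ M * ε ^ δ} := by
        intro t ht
        refine ⟨ht.1, le_trans ht.2 ?_⟩
        have habs : |t - s| ≤ ε := by
          rw [abs_le]
          constructor <;> [linarith [ht.1.1]; linarith [ht.1.2]]
        exact mul_le_mul_of_nonneg_left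
          (Real.rpow_le_rpow (abs_nonneg _) habs hδ0.le) hM.le
      have hfin : volume {t | t ∈ Set.Ioo (s - ε) (s + ε) ∧ ‖w t - w s‖ ≤ M * ε ^ δ} ≠ ⊤ := by
        refine ne_of_lt (lt_of_le_of_lt (measure_mono (fun t ht => ht.1)) ?_)
        rw [Real.volume_Ioo]
        exact ENNReal.ofReal_lt_top
      have hmono : (volume {t | t ∈ Set.Ioo (s - ε) (s + ε) ∧
          ‖w t - w s‖ ≤ M * |t - s| ^ δ}).toReal
          ≤ (volume {t | t ∈ Set.Ioo (s - ε) (s + ε) ∧ ‖w t - w s‖ ≤ M * ε ^ δ}).toReal :=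
        ENNReal.toReal_mono hfin (measure_mono hsub)
      have hkb := key_bound (s := s) hγ0 hρ hK0 hw hK hε1 (by linarith) (by linarith) hr hR
      -- compute ball volume
      have hballvol : (volume (Metric.ball (0 : EuclideanSpace ℝ (Fin d)) (ε ^ κ))).toReal
          = ε ^ (κ * (d : ℝ)) * Cd := by
        rw [EuclideanSpace.volume_ball, Fintype.card_fin]
        rw [ENNReal.toReal_mul, ENNReal.toReal_pow, ENNReal.toReal_ofReal hR.le,
          ENNReal.toReal_ofReal hCd0]
        congr 1
        rw [← Real.rpow_natCast (ε ^ κ) d, ← Real.rpow_mul hε1.le]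
      -- compute second term
      have hsecond : K * (2 * π / (M * ε ^ δ)) ^ (-ρ) * (ε ^ κ) ^ (-ρ) * (2 * ε) ^ γ
          = (K * (2 * π) ^ (-ρ) * M ^ ρ * 2 ^ γ) * (ε * ε ^ (κ * ρ)) := by
        rw [Real.div_rpow (by positivity) (by positivity),
          Real.rpow_neg (le_of_lt hr), div_inv_eq_mul,
          Real.mul_rpow hM.le (Real.rpow_nonneg hε1.le δ),
          ← Real.rpow_mul hε1.le δ ρ,
          ← Real.rpow_mul hε1.le κ (-ρ),
          Real.mul_rpow (by norm_num : (0:ℝ) ≤ 2) hε1.le]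
        have hexp : δ * ρ + κ * (-ρ) + γ = 1 + κ * ρ := by
          rw [hκ_def]; field_simp; ring
        have hεpow : ε ^ (δ * ρ) * ε ^ (κ * (-ρ)) * ε ^ γ = ε * ε ^ (κ * ρ) := by
          calc ε ^ (δ * ρ) * ε ^ (κ * (-ρ)) * ε ^ γ
              = ε ^ (δ * ρ + κ * (-ρ) + γ) := by
                rw [Real.rpow_add hε1, Real.rpow_add hε1]
            _ = ε ^ (1 : ℝ) * ε ^ (κ * ρ) := by rw [hexp, Real.rpow_add hε1]
            _ = ε * ε ^ (κ * ρ) := by rw [Real.rpow_one]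
        linear_combination (K * (2 * π) ^ (-ρ) * M ^ ρ * 2 ^ γ) * hεpow
      rw [div_le_iff₀ (by positivity : (0:ℝ) < 2 * ε)]
      calc (volume {t | t ∈ Set.Ioo (s - ε) (s + ε) ∧
              ‖w t - w s‖ ≤ M * |t - s| ^ δ}).toReal
          ≤ (volume {t | t ∈ Set.Ioo (s - ε) (s + ε) ∧
              ‖w t - w s‖ ≤ M * ε ^ δ}).toReal := hmono
        _ ≤ Real.exp π * (2 * ε *
              (volume (Metric.ball (0 : EuclideanSpace ℝ (Fin d)) (ε ^ κ))).toReal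
              + K * (2 * π / (M * ε ^ δ)) ^ (-ρ) * (ε ^ κ) ^ (-ρ) * (2 * ε) ^ γ) := hkb
        _ = (D1 * ε ^ (κ * d) + D2 * ε ^ (κ * ρ)) * (2 * ε) := by
            rw [hballvol, hsecond, hD1_def, hD2_def]; ring
    have htend : Filter.Tendsto (fun ε : ℝ => D1 * ε ^ (κ * d) + D2 * ε ^ (κ * ρ))
        (nhdsWithin 0 (Set.Ioi 0)) (nhds 0) := by
      have h0 : ∀ a : ℝ, 0 < a → Filter.Tendsto (fun ε : ℝ => ε ^ a)
          (nhdsWithin (0:ℝ) (Set.Ioi 0)) (nhds 0) := by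
        intro a ha
        have hc := (Real.continuousAt_rpow_const 0 a (Or.inr ha.le)).tendsto
        rw [Real.zero_rpow ha.ne'] at hc
        exact hc.mono_left nhdsWithin_le_nhds
      have hd' : (0:ℝ) < κ * d := mul_pos hκ (by exact_mod_cast hd)
      have := ((h0 _ hd').const_mul D1).add ((h0 _ (mul_pos hκ hρ)).const_mul D2)
      simpa using this
    refine squeeze_zero' ?_ ?_ htend
    · filter_upwards [self_mem_nhdsWithin] with ε hε
      have : (0:ℝ) < ε := hε
      positivity
    · exact Filter.eventually_of_mem (Ioo_mem_nhdsGT_of_mem ⟨le_refl _, hε0⟩) hbound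
  refine ⟨part1, ?_⟩
  -- Part 2
  intro s hs hcontra
  obtain ⟨M, hM, ε, hε, hHol⟩ := hcontra
  have hten := part1 M hM s hs
  obtain ⟨hs0, hsT⟩ := hs
  set ε1 : ℝ := min ε (min s (T - s)) with hε1_def
  have hε1 : 0 < ε1 := lt_min hε (lt_min hs0 (by linarith))
  have hev : ∀ ε' ∈ Set.Ioo (0 : ℝ) ε1,
      (volume {t | t ∈ Set.Ioo (s - ε') (s + ε') ∧
        ‖w t - w s‖ ≤ M * |t - s| ^ δ}).toReal / (2 * ε') = 1 := by
    intro ε' hε'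
    obtain ⟨h1, h2⟩ := hε'
    have hε'ε : ε' < ε := lt_of_lt_of_le h2 (min_le_left _ _)
    have hε's : ε' < s := lt_of_lt_of_le h2 (le_trans (min_le_right _ _) (min_le_left _ _))
    have hε'T : ε' < T - s := lt_of_lt_of_le h2 (le_trans (min_le_right _ _) (min_le_right _ _))
    have hset : {t | t ∈ Set.Ioo (s - ε') (s + ε') ∧ ‖w t - w s‖ ≤ M * |t - s| ^ δ}
        = Set.Ioo (s - ε') (s + ε') := by
      ext t
      simp only [Set.mem_setOf_eq, Set.mem_Ioo]
      refine ⟨fun ht => ht.1, fun ht => ⟨ht, ?_⟩⟩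
      refine hHol t ⟨by linarith [ht.1], by linarith [ht.2]⟩ ?_
      rw [abs_lt]
      exact ⟨by linarith [ht.1, hε'ε], by linarith [ht.2, hε'ε]⟩
    rw [hset, Real.volume_Ioo, show s + ε' - (s - ε') = 2 * ε' by ring,
      ENNReal.toReal_ofReal (by linarith)]
    field_simp
  have hfilter : Set.Ioo (0 : ℝ) ε1 ∈ nhdsWithin (0 : ℝ) (Set.Ioi 0) :=
    Ioo_mem_nhdsGT_of_mem ⟨le_refl _, hε1⟩
  have hcongr : (fun ε' : ℝ =>
      (volume {t | t ∈ Set.Ioo (s - ε') (s + ε') ∧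
        ‖w t - w s‖ ≤ M * |t - s| ^ δ}).toReal / (2 * ε'))
      =ᶠ[nhdsWithin (0 : ℝ) (Set.Ioi 0)] fun _ => (1 : ℝ) :=
    Filter.eventuallyEq_of_mem hfilter hev
  have h1 : Filter.Tendsto (fun _ : ℝ => (1 : ℝ)) (nhdsWithin (0 : ℝ) (Set.Ioi 0)) (nhds 0) :=
    (Filter.tendsto_congr' hcongr).mp hten
  have := tendsto_nhds_unique h1 tendsto_const_nhds
  norm_num at this
end
end

section
/- Hölder roughness: if w : [0,T] → ℝ^d is (γ,ρ)-irregular, then for any θ > (1−γ)/ρ, w is θ-Hölder rough with infinite modulus of roughness: for every L > 0 there exists ε₀ > 0 such that for every direction v with |v| = 1, every s ∈ [0,T], and every ε ∈ (0,ε₀], there exists t ∈ [0,T] with |t−s| < ε and |v · (w_t − w_s)| ≥ L ε^θ. -/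
open MeasureTheory Real

noncomputable section

/-!
If `|v · (w_t - w_s)| < M` for all `t` within `ε` of `s`, then on an interval `[a, a + ε/2]` of
such times the phase `c v · w_r`, `c = π / (3M)`, stays within `π/3` of `c v · w_s`, so the real
part of the rotated integral gives `‖Φ^w_{a,a+ε/2}(c v)‖ ≥ ε/4`. Irregularity bounds the same
quantity by `K c^{-ρ} (ε/2)^γ`, which for `M = L ε^θ` is a multiple of `ε^{θρ+γ}`. As
`θ > (1-γ)/ρ` means `θρ + γ > 1`, this is `o(ε)`: a contradiction once `ε` is small.
-/

open Filter Topology Set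
open scoped InnerProductSpace

theorem le_norm_intervalIntegral_exp_I_mul {f : ℝ → ℝ} (hf : Continuous f) {a b : ℝ}
    (hab : a ≤ b) (hf_le : ∀ r ∈ Icc a b, |f r| ≤ π / 3) :
    (b - a) / 2 ≤ ‖∫ r in a..b, Complex.exp (Complex.I * f r)‖ := by
  have hcos : ∀ r ∈ Icc a b, 1 / 2 ≤ cos (f r) := fun r hr => by
    rw [← cos_pi_div_three, ← cos_abs (f r)]
    exact cos_le_cos_of_nonneg_of_le_pi (abs_nonneg _) (by linarith [pi_pos]) (hf_le r hr)
  have hre : ∫ r in a..b, cos (f r) = (∫ r in a..b, Complex.exp (Complex.I * f r)).re := by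
    have hint : Continuous fun r => Complex.exp (Complex.I * f r) := by fun_prop
    rw [← RCLike.re_to_complex, ← intervalIntegral.intervalIntegral_re (hint.intervalIntegrable a b)]
    simp_rw [RCLike.re_to_complex, mul_comm Complex.I, Complex.exp_ofReal_mul_I_re]
  calc (b - a) / 2 = ∫ _ in a..b, (1 / 2 : ℝ) := by
        rw [intervalIntegral.integral_const, smul_eq_mul]; ring
    _ ≤ ∫ r in a..b, cos (f r) :=
      intervalIntegral.integral_mono_on hab intervalIntegrable_const
        ((continuous_cos.comp hf).intervalIntegrable a b) hcos
    _ = (∫ r in a..b, Complex.exp (Complex.I * f r)).re := hre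
    _ ≤ ‖∫ r in a..b, Complex.exp (Complex.I * f r)‖ := Complex.re_le_norm _

theorem norm_phiW_smul {d : ℕ} (w : ℝ → EuclideanSpace ℝ (Fin d)) (c : ℝ)
    (v : EuclideanSpace ℝ (Fin d)) (s a b : ℝ) :
    ‖phiW w (c • v) a b‖ =
      ‖∫ r in a..b, Complex.exp (Complex.I * ↑(c * ⟪v, w r - w s⟫_ℝ))‖ := by
  have hfactor : ∀ r, Complex.exp (Complex.I * ↑⟪c • v, w r⟫_ℝ) =
      Complex.exp (Complex.I * ↑(c * ⟪v, w s⟫_ℝ)) *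
        Complex.exp (Complex.I * ↑(c * ⟪v, w r - w s⟫_ℝ)) := fun r => by
    rw [← Complex.exp_add, real_inner_smul_left, inner_sub_right]
    push_cast
    ring_nf
  simp_rw [phiW, hfactor, intervalIntegral.integral_const_mul, norm_mul,
    Complex.norm_exp_I_mul_ofReal, one_mul]

theorem exists_Icc_subset_Icc_inter_ball {T s ε : ℝ} (hs : s ∈ Icc 0 T) (hε : 0 < ε)
    (hεT : ε ≤ T) : ∃ a, Icc a (a + ε / 2) ⊆ Icc 0 T ∩ Metric.ball s ε := by
  refine ⟨min s (T - ε / 2), fun r hr => ?_⟩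
  have hlow : s - ε / 2 ≤ min s (T - ε / 2) := le_min (by linarith) (by linarith [hs.2])
  have hs' : min s (T - ε / 2) ≤ s := min_le_left _ _
  have hT' : min s (T - ε / 2) ≤ T - ε / 2 := min_le_right _ _
  have h0 : 0 ≤ min s (T - ε / 2) := le_min hs.1 (by linarith)
  simp only [mem_inter_iff, mem_Icc, Metric.mem_ball, Real.dist_eq, abs_lt] at hr ⊢
  refine ⟨⟨?_, ?_⟩, ?_, ?_⟩ <;> linarith

theorem le_norm_phiW_of_abs_inner_sub_le {d : ℕ} {w : ℝ → EuclideanSpace ℝ (Fin d)}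
    (hw : Continuous w) (v : EuclideanSpace ℝ (Fin d)) {s a b M : ℝ} (hab : a ≤ b)
    (hM : 0 < M) (hosc : ∀ r ∈ Icc a b, |⟪v, w r - w s⟫_ℝ| ≤ M) :
    (b - a) / 2 ≤ ‖phiW w ((π / (3 * M)) • v) a b‖ := by
  rw [norm_phiW_smul w _ v s]
  refine le_norm_intervalIntegral_exp_I_mul (by fun_prop) hab fun r hr => ?_
  calc |π / (3 * M) * ⟪v, w r - w s⟫_ℝ| = π / (3 * M) * |⟪v, w r - w s⟫_ℝ| := by
        rw [abs_mul, abs_of_pos (by positivity)]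
    _ ≤ π / (3 * M) * M := by gcongr; exact hosc r hr
    _ = π / 3 := by field_simp

theorem IsIrregularWith.exists_le_abs_inner_sub {d : ℕ} {T γ ρ K : ℝ}
    {w : ℝ → EuclideanSpace ℝ (Fin d)} (hK : IsIrregularWith T γ ρ K w) (hw : Continuous w)
    {v : EuclideanSpace ℝ (Fin d)} (hv : ‖v‖ = 1) {s ε M : ℝ} (hs : s ∈ Icc 0 T)
    (hε : 0 < ε) (hεT : ε ≤ T) (hM : 0 < M)
    (hbound : K * (π / (3 * M)) ^ (-ρ) * (ε / 2) ^ γ < ε / 4) :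
    ∃ t ∈ Icc 0 T, |t - s| < ε ∧ M ≤ |⟪v, w t - w s⟫_ℝ| := by
  by_contra! hsmall
  obtain ⟨a, ha⟩ := exists_Icc_subset_Icc_inter_ball hs hε hεT
  have hξ : (π / (3 * M)) • v ≠ 0 :=
    smul_ne_zero (by positivity) (norm_ne_zero_iff.mp (by rw [hv]; exact one_ne_zero))
  have hlow := le_norm_phiW_of_abs_inner_sub_le hw v (by linarith : a ≤ a + ε / 2) hM
    fun r hr => (hsmall r (ha hr).1 (by simpa [Real.dist_eq] using (ha hr).2)).le
  have hup := hK _ hξ a (a + ε / 2) (ha ⟨le_rfl, by linarith⟩).1.1 (by linarith)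
    (ha ⟨by linarith, le_rfl⟩).1.2
  rw [norm_smul, hv, mul_one, Real.norm_of_nonneg (by positivity)] at hup
  simp only [add_sub_cancel_left] at hlow hup
  linarith

theorem eventually_mul_rpow_lt_mul {p : ℝ} (hp : 1 < p) (A : ℝ) {c : ℝ} (hc : 0 < c) :
    ∀ᶠ ε in 𝓝[>] (0 : ℝ), A * ε ^ p < c * ε := by
  have hlim : Tendsto (fun ε : ℝ => A * ε ^ (p - 1)) (𝓝[>] 0) (𝓝 0) := by
    have := ((continuousAt_rpow_const 0 (p - 1) (Or.inr (by linarith))).tendsto).mono_left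
      (nhdsWithin_le_nhds (s := Ioi 0))
    simpa [zero_rpow (by linarith : p - 1 ≠ 0)] using this.const_mul A
  filter_upwards [hlim.eventually (gt_mem_nhds hc), self_mem_nhdsWithin] with ε hεA (hε : 0 < ε)
  calc A * ε ^ p = A * ε ^ (p - 1) * ε := by
        rw [mul_assoc, ← rpow_add_one (ne_of_gt hε), sub_add_cancel]
    _ < c * ε := mul_lt_mul_of_pos_right hεA hε

theorem eventually_irregularity_bound_lt {γ ρ θ K L : ℝ} (hL : 0 < L) (hp : 1 < θ * ρ + γ) :
    ∀ᶠ ε in 𝓝[>] (0 : ℝ), K * (π / (3 * (L * ε ^ θ))) ^ (-ρ) * (ε / 2) ^ γ < ε / 4 := by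
  filter_upwards [eventually_mul_rpow_lt_mul hp (K * (3 * L / π) ^ ρ * (1 / 2) ^ γ)
    (by norm_num : (0 : ℝ) < 1 / 4), self_mem_nhdsWithin] with ε hlt (hε : 0 < ε)
  have hfreq : (π / (3 * (L * ε ^ θ))) ^ (-ρ) = (3 * L / π) ^ ρ * ε ^ (θ * ρ) := by
    rw [rpow_neg (by positivity), ← inv_rpow (by positivity), inv_div,
      show 3 * (L * ε ^ θ) / π = 3 * L / π * ε ^ θ by ring,
      mul_rpow (by positivity) (by positivity), ← rpow_mul hε.le]
  have htime : (ε / 2) ^ γ = (1 / 2) ^ γ * ε ^ γ := by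
    rw [show ε / 2 = 1 / 2 * ε by ring, mul_rpow (by norm_num) hε.le]
  convert hlt using 1
  · rw [hfreq, htime, rpow_add hε]
    ring
  · ring

theorem holder_rough_general {d : ℕ} {T γ ρ θ : ℝ} (hT : 0 < T)
    (hρ : 0 < ρ) (hθ : (1 - γ) / ρ < θ)
    (w : ℝ → EuclideanSpace ℝ (Fin d)) (hw : Continuous w)
    (K : ℝ) (hK : IsIrregularWith T γ ρ K w) :
    ∀ L : ℝ, 0 < L → ∃ ε₀ > (0 : ℝ),
      ∀ v : EuclideanSpace ℝ (Fin d), ‖v‖ = 1 →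
      ∀ s ∈ Set.Icc (0 : ℝ) T, ∀ ε : ℝ, 0 < ε → ε ≤ ε₀ →
        ∃ t ∈ Set.Icc (0 : ℝ) T, |t - s| < ε ∧
          L * ε ^ θ ≤ |(inner ℝ v (w t - w s) : ℝ)| := by
  intro L hL
  have hp : 1 < θ * ρ + γ := by linarith [(div_lt_iff₀ hρ).mp hθ]
  obtain ⟨ε₀, hε₀, hsmall⟩ := (nhdsGT_basis_Ioc (0 : ℝ)).eventually_iff.mp
    ((eventually_irregularity_bound_lt hL hp).and (nhdsWithin_le_nhds (Iic_mem_nhds hT)))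
  refine ⟨ε₀, hε₀, fun v hv s hs ε hε hεε₀ => ?_⟩
  obtain ⟨hbound, hεT⟩ := hsmall ⟨hε, hεε₀⟩
  exact hK.exists_le_abs_inner_sub hw hv hs hε hεT (by positivity) hbound

/-- Hölder roughness: if `w` is `(γ,ρ)`-irregular then for any `θ > (1−γ)/ρ`, `w` is
`θ`-Hölder rough with infinite modulus of roughness: for every `L > 0` there exists
`ε₀ > 0` such that for every unit direction `v`, every `s ∈ [0,T]` and every
`ε ∈ (0,ε₀]` there exists `t ∈ [0,T]` with `|t−s| < ε` and `|v·(w_t − w_s)| ≥ L ε^θ`. -/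
theorem holder_rough {d : ℕ} {T γ ρ θ : ℝ} (hT : 0 < T)
    (hγ : γ ∈ Set.Ioo (0 : ℝ) 1) (hρ : 0 < ρ) (hθ : (1 - γ) / ρ < θ)
    (w : ℝ → EuclideanSpace ℝ (Fin d)) (hw : Continuous w)
    (K : ℝ) (hK : IsIrregularWith T γ ρ K w) :
    ∀ L : ℝ, 0 < L → ∃ ε₀ > (0 : ℝ),
      ∀ v : EuclideanSpace ℝ (Fin d), ‖v‖ = 1 →
      ∀ s ∈ Set.Icc (0 : ℝ) T, ∀ ε : ℝ, 0 < ε → ε ≤ ε₀ →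
        ∃ t ∈ Set.Icc (0 : ℝ) T, |t - s| < ε ∧
          L * ε ^ θ ≤ |(inner ℝ v (w t - w s) : ℝ)| :=
  holder_rough_general hT hρ hθ w hw K hK
end
end
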